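/- arXiv:2407.13002 — 3 statements merged into one kernel-verified Lean document; each statement's English description precedes it below -/
import Mathlib

section
/- Let μ, ν ∈ 𝓜 with μ(ℝ) ≤ ν(ℝ) and suppose μ = μ₁ + μ₂ with μ₁, μ₂ ∈ 𝓜. Then the generalized shadow measure is associative: S^ν(μ₁ + μ₂) = S^ν(μ₁) + S^{ν − S^ν(μ₁)}(μ₂). Moreover p_{μ₁+μ₂, ν} = p_{μ₁, ν} + p_{μ₂, ν − S^ν(μ₁)}. -/
open MeasureTheory Set Filter

noncomputable section

/-- Total mass of a measure on ℝ, as a real number. -/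
def mass (η : Measure ℝ) : ℝ := (η univ).toReal

/-- Mean (first moment) of a measure on ℝ. -/
def mean (η : Measure ℝ) : ℝ := ∫ x, x ∂η

/-- `η ∈ 𝓜`: finite Borel measure on ℝ with finite first moment. -/
def MemM (η : Measure ℝ) : Prop := IsFiniteMeasure η ∧ Integrable (fun x => x) η

/-- Put potential `P_η(k) = ∫ (k-x)⁺ dη`. -/
def Pput (η : Measure ℝ) (k : ℝ) : ℝ := ∫ x, max (k - x) 0 ∂η

/-- Call potential `C_η(k) = ∫ (x-k)⁺ dη`. -/
def Ccall (η : Measure ℝ) (k : ℝ) : ℝ := ∫ x, max (x - k) 0 ∂η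

/-- `p_{μ,ν} = sup_k (P_μ(k) - P_ν(k))`. -/
def pconst (μ ν : Measure ℝ) : ℝ := ⨆ k : ℝ, (Pput μ k - Pput ν k)

/-- `c_{μ,ν} = sup_k (C_μ(k) - C_ν(k))`. -/
def cconst (μ ν : Measure ℝ) : ℝ := ⨆ k : ℝ, (Ccall μ k - Ccall ν k)

/-- `π ∈ Π(μ,ν)`: coupling with marginals μ and ν. -/
def IsCoupling (μ ν : Measure ℝ) (π : Measure (ℝ × ℝ)) : Prop :=
  π.fst = μ ∧ π.snd = ν

open Classical in
/-- Barycenter `π̄_x = ∫ y π_x(dy)` of the disintegration of π at x. -/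
def bar (π : Measure (ℝ × ℝ)) (x : ℝ) : ℝ :=
  if h : IsFiniteMeasure π then
    haveI := h
    ∫ y, y ∂(π.condKernel x)
  else 0

/-- Weak `L¹` transport cost `∫ |x - π̄_x| μ(dx)`. -/
def WOTcost (μ : Measure ℝ) (π : Measure (ℝ × ℝ)) : ℝ := ∫ x, |x - bar π x| ∂μ

/-- `V(μ,ν) = inf over couplings of the weak L¹ cost`. -/
def V (μ ν : Measure ℝ) : ℝ :=
  sInf {r | ∃ π, IsCoupling μ ν π ∧ r = WOTcost μ π}

/-- Martingale couplings. -/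
def IsMartCoupling (μ ν : Measure ℝ) (π : Measure (ℝ × ℝ)) : Prop :=
  IsCoupling μ ν π ∧ ∀ᵐ x ∂μ, bar π x = x

/-- Supermartingale couplings. -/
def IsSupCoupling (μ ν : Measure ℝ) (π : Measure (ℝ × ℝ)) : Prop :=
  IsCoupling μ ν π ∧ ∀ᵐ x ∂μ, bar π x ≤ x

/-- Submartingale couplings. -/
def IsSubCoupling (μ ν : Measure ℝ) (π : Measure (ℝ × ℝ)) : Prop :=
  IsCoupling μ ν π ∧ ∀ᵐ x ∂μ, x ≤ bar π x

/-- `x⁻ = inf {k : P_ν(k) + p_{μ,ν} = P_μ(k)}`. -/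
def xminus (μ ν : Measure ℝ) : ℝ := sInf {k | Pput ν k + pconst μ ν = Pput μ k}

/-- `x⁺ = sup {k : P_ν(k) + p_{μ,ν} = P_μ(k)}`. -/
def xplus (μ ν : Measure ℝ) : ℝ := sSup {k | Pput ν k + pconst μ ν = Pput μ k}

/-- Left derivative. -/
def leftD (f : ℝ → ℝ) (x : ℝ) : ℝ := derivWithin f (Iio x) x

/-- Right derivative. -/
def rightD (f : ℝ → ℝ) (x : ℝ) : ℝ := derivWithin f (Ioi x) x

/-- `η⁻ = μ|_{(-∞,x⁻)}`. -/
def etaMinus (μ ν : Measure ℝ) : Measure ℝ := μ.restrict (Iio (xminus μ ν))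

/-- `η⁰ = μ|_{[x⁻,x⁺]}`. -/
def etaZero (μ ν : Measure ℝ) : Measure ℝ := μ.restrict (Icc (xminus μ ν) (xplus μ ν))

/-- `η⁺ = μ|_{(x⁺,∞)}`. -/
def etaPlus (μ ν : Measure ℝ) : Measure ℝ := μ.restrict (Ioi (xplus μ ν))

/-- `χ⁻ = ν|_{(-∞,x⁻)} + (Δ⁻ - P_ν'(x⁻-)) δ_{x⁻}`. -/
def chiMinus (μ ν : Measure ℝ) : Measure ℝ :=
  ν.restrict (Iio (xminus μ ν)) +
    (ENNReal.ofReal (leftD (Pput μ) (xminus μ ν) - leftD (Pput ν) (xminus μ ν))) •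
      Measure.dirac (xminus μ ν)

/-- `χ⁺ = ν|_{(x⁺,∞)} + (Δ⁺ - P_ν'(x⁺+)) δ_{x⁺}`. -/
def chiPlus (μ ν : Measure ℝ) : Measure ℝ :=
  ν.restrict (Ioi (xplus μ ν)) +
    (ENNReal.ofReal (rightD (Pput μ) (xplus μ ν) - rightD (Pput ν) (xplus μ ν))) •
      Measure.dirac (xplus μ ν)

/-- `χ⁰ = ν - χ⁻ - χ⁺`. -/
def chiZero (μ ν : Measure ℝ) : Measure ℝ := ν - chiMinus μ ν - chiPlus μ ν

/-- `Π*(μ,ν)`: couplings of the form sub + martingale + super on the decomposition. -/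
def PiStar (μ ν : Measure ℝ) : Set (Measure (ℝ × ℝ)) :=
  {π | IsCoupling μ ν π ∧
    ∃ πm π0 πp : Measure (ℝ × ℝ),
      π = πm + π0 + πp ∧
      IsSubCoupling (etaMinus μ ν) (chiMinus μ ν) πm ∧
      IsMartCoupling (etaZero μ ν) (chiZero μ ν) π0 ∧
      IsSupCoupling (etaPlus μ ν) (chiPlus μ ν) πp}

/-- Convex order `η ≤_c χ`. -/
def CxOrder (η χ : Measure ℝ) : Prop :=
  ∀ f : ℝ → ℝ, ConvexOn ℝ univ f → Integrable f η → Integrable f χ →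
    ∫ x, f x ∂η ≤ ∫ x, f x ∂χ

/-- Convex decreasing order `η ≤_cd χ`. -/
def CdOrder (η χ : Measure ℝ) : Prop :=
  ∀ f : ℝ → ℝ, ConvexOn ℝ univ f → Antitone f → Integrable f η → Integrable f χ →
    ∫ x, f x ∂η ≤ ∫ x, f x ∂χ

/-- Convex increasing order `η ≤_ci χ`. -/
def CiOrder (η χ : Measure ℝ) : Prop :=
  ∀ f : ℝ → ℝ, ConvexOn ℝ univ f → Monotone f → Integrable f η → Integrable f χ →
    ∫ x, f x ∂η ≤ ∫ x, f x ∂χ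

/-- Convex hull (largest convex minorant) of a function. -/
def convHullFn (f : ℝ → ℝ) : ℝ → ℝ :=
  fun x => sSup {v : ℝ | ∃ g : ℝ → ℝ, ConvexOn ℝ univ g ∧ (∀ y, g y ≤ f y) ∧ v = g x}

/-- `S` is the generalized shadow measure of μ in ν, characterized by its put potential. -/
def IsShadow (μ ν S : Measure ℝ) : Prop :=
  MemM S ∧
    ∀ k, Pput S k = Pput ν k - convHullFn (fun t => Pput ν t - Pput μ t) k - pconst μ ν

/-- `𝒯_{μ,ν}`: possible target laws of μ in ν. -/
def TargetSet (μ ν : Measure ℝ) : Set (Measure ℝ) :=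
  {θ | MemM θ ∧ mass θ = mass μ ∧ θ ≤ ν}


namespace Aux
open Topology


lemma memM_add {α β : Measure ℝ} (hα : MemM α) (hβ : MemM β) : MemM (α + β) := by
  haveI := hα.1; haveI := hβ.1
  exact ⟨by infer_instance, hα.2.add_measure hβ.2⟩

lemma int_put {η : Measure ℝ} (hη : MemM η) (k : ℝ) :
    Integrable (fun x => max (k - x) 0) η := by
  haveI := hη.1
  exact ((integrable_const k).sub hη.2).pos_part

lemma int_call {η : Measure ℝ} (hη : MemM η) (k : ℝ) :
    Integrable (fun x => max (x - k) 0) η := by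
  haveI := hη.1
  exact (hη.2.sub (integrable_const k)).pos_part

lemma Pput_add {α β : Measure ℝ} (hα : MemM α) (hβ : MemM β) (k : ℝ) :
    Pput (α + β) k = Pput α k + Pput β k :=
  integral_add_measure (int_put hα k) (int_put hβ k)

lemma Pput_nonneg (η : Measure ℝ) (k : ℝ) : 0 ≤ Pput η k :=
  integral_nonneg fun x => le_max_right _ _

lemma Ccall_nonneg (η : Measure ℝ) (k : ℝ) : 0 ≤ Ccall η k :=
  integral_nonneg fun x => le_max_right _ _

lemma mass_nonneg (η : Measure ℝ) : 0 ≤ mass η := ENNReal.toReal_nonneg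

lemma mass_add {α β : Measure ℝ} (hα : MemM α) (hβ : MemM β) :
    mass (α + β) = mass α + mass β := by
  haveI := hα.1; haveI := hβ.1
  simp [mass, Measure.add_apply, ENNReal.toReal_add (measure_ne_top _ _) (measure_ne_top _ _)]

lemma parity {η : Measure ℝ} (hη : MemM η) (k : ℝ) :
    Pput η k - Ccall η k = k * mass η - mean η := by
  haveI := hη.1
  have h1 : Pput η k - Ccall η k = ∫ x, (max (k - x) 0 - max (x - k) 0) ∂η :=
    (integral_sub (int_put hη k) (int_call hη k)).symm
  have h2 : ∀ x : ℝ, max (k - x) 0 - max (x - k) 0 = k - x := by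
    intro x; rcases le_total x k with h | h
    · rw [max_eq_left (by linarith), max_eq_right (by linarith)]; ring
    · rw [max_eq_right (by linarith), max_eq_left (by linarith)]; ring
  rw [h1]
  simp_rw [h2]
  rw [integral_sub (integrable_const k) hη.2, integral_const]
  simp [mass, mean, smul_eq_mul, mul_comm, measureReal_def]

lemma Ccall_antitone {η : Measure ℝ} (hη : MemM η) : Antitone (Ccall η) := by
  intro a b hab
  exact integral_mono (int_call hη b) (int_call hη a)
    (fun x => max_le_max (by linarith) le_rfl)

lemma Pput_le_abs {η : Measure ℝ} (hη : MemM η) {k : ℝ} (hk : k ≤ 0) :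
    Pput η k ≤ ∫ x, |x| ∂η := by
  haveI := hη.1
  refine integral_mono (int_put hη k) hη.2.abs (fun x => ?_)
  rcases le_total x k with h | h
  · rw [max_eq_left (by linarith)]
    have : x ≤ 0 := le_trans h hk
    rw [abs_of_nonpos this]; linarith
  · rw [max_eq_right (by linarith)]; exact abs_nonneg x

lemma Ccall_le_abs {η : Measure ℝ} (hη : MemM η) {k : ℝ} (hk : 0 ≤ k) :
    Ccall η k ≤ ∫ x, |x| ∂η := by
  haveI := hη.1
  refine integral_mono (int_call hη k) hη.2.abs (fun x => ?_)
  rcases le_total x k with h | h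
  · rw [max_eq_right (by linarith)]; exact abs_nonneg x
  · rw [max_eq_left (by linarith)]
    have : 0 ≤ x := le_trans hk h
    rw [abs_of_nonneg this]; linarith

lemma Pput_sub_le {α β : Measure ℝ} (hα : MemM α) (hβ : MemM β)
    (hm : mass α ≤ mass β) (k : ℝ) :
    Pput α k - Pput β k ≤ (∫ x, |x| ∂α) + |mean β - mean α| := by
  rcases le_total k 0 with hk | hk
  · have h1 := Pput_le_abs hα hk
    have h2 := Pput_nonneg β k
    have := abs_nonneg (mean β - mean α)
    linarith
  · have e1 := parity hα k
    have e2 := parity hβ k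
    have h3 : Ccall α k ≤ ∫ x, |x| ∂α := Ccall_le_abs hα hk
    have h4 := Ccall_nonneg β k
    have h5 : k * mass α ≤ k * mass β := mul_le_mul_of_nonneg_left hm hk
    have h6 : mean β - mean α ≤ |mean β - mean α| := le_abs_self _
    nlinarith

lemma bddAbove_Pput_sub {α β : Measure ℝ} (hα : MemM α) (hβ : MemM β)
    (hm : mass α ≤ mass β) :
    BddAbove (range fun k => Pput α k - Pput β k) := by
  refine ⟨(∫ x, |x| ∂α) + |mean β - mean α|, ?_⟩
  rintro v ⟨k, rfl⟩
  exact Pput_sub_le hα hβ hm k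

lemma Pput_convex {η : Measure ℝ} (hη : MemM η) : ConvexOn ℝ univ (Pput η) := by
  refine ⟨convex_univ, fun a _ b _ ta tb hta htb hab => ?_⟩
  have key : ∀ x : ℝ, max (ta • a + tb • b - x) 0 ≤ ta * max (a - x) 0 + tb * max (b - x) 0 := by
    intro x
    have h1 : ta • a + tb • b - x = ta * (a - x) + tb * (b - x) := by
      simp only [smul_eq_mul]; linear_combination x * hab
    rw [h1]
    have h2 : ta * (a - x) + tb * (b - x) ≤ ta * max (a - x) 0 + tb * max (b - x) 0 := by
      gcongr <;> [exact le_max_left _ _; exact le_max_left _ _]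
    have h3 : (0:ℝ) ≤ ta * max (a - x) 0 + tb * max (b - x) 0 := by positivity
    exact max_le h2 h3
  have := integral_mono (int_put hη _) (((int_put hη a).const_mul ta).add
    ((int_put hη b).const_mul tb)) key
  calc Pput η (ta • a + tb • b) ≤ ∫ x, (ta * max (a - x) 0 + tb * max (b - x) 0) ∂η := this
    _ = ta • Pput η a + tb • Pput η b := by
        rw [integral_add ((int_put hη a).const_mul ta) ((int_put hη b).const_mul tb),
          integral_const_mul, integral_const_mul]
        simp [Pput, smul_eq_mul]



lemma hull_bdd (f : ℝ → ℝ) (x : ℝ) :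
    BddAbove {v : ℝ | ∃ g : ℝ → ℝ, ConvexOn ℝ univ g ∧ (∀ y, g y ≤ f y) ∧ v = g x} :=
  ⟨f x, by rintro v ⟨g, _, hle, rfl⟩; exact hle x⟩

lemma le_hull {f g : ℝ → ℝ} (hg : ConvexOn ℝ univ g) (hle : ∀ y, g y ≤ f y) (x : ℝ) :
    g x ≤ convHullFn f x :=
  le_csSup (hull_bdd f x) ⟨g, hg, hle, rfl⟩

lemma hull_le {f : ℝ → ℝ} {x B : ℝ}
    (hne : ∃ g : ℝ → ℝ, ConvexOn ℝ univ g ∧ ∀ y, g y ≤ f y)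
    (hB : ∀ g : ℝ → ℝ, ConvexOn ℝ univ g → (∀ y, g y ≤ f y) → g x ≤ B) :
    convHullFn f x ≤ B := by
  obtain ⟨g₀, hg₀, hle₀⟩ := hne
  refine csSup_le ⟨g₀ x, g₀, hg₀, hle₀, rfl⟩ ?_
  rintro v ⟨g, hg, hle, rfl⟩
  exact hB g hg hle

lemma hull_le_self {f : ℝ → ℝ}
    (hne : ∃ g : ℝ → ℝ, ConvexOn ℝ univ g ∧ ∀ y, g y ≤ f y) (x : ℝ) :
    convHullFn f x ≤ f x :=
  hull_le hne fun g _ hle => hle x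

lemma hull_convex {f : ℝ → ℝ}
    (hne : ∃ g : ℝ → ℝ, ConvexOn ℝ univ g ∧ ∀ y, g y ≤ f y) :
    ConvexOn ℝ univ (convHullFn f) := by
  refine ⟨convex_univ, fun a _ b _ ta tb hta htb hab => ?_⟩
  refine hull_le hne fun g hg hle => ?_
  calc g (ta • a + tb • b) ≤ ta • g a + tb • g b :=
        hg.2 (mem_univ a) (mem_univ b) hta htb hab
    _ ≤ ta • convHullFn f a + tb • convHullFn f b := by
        gcongr <;> [skip; skip] <;> exact le_hull hg hle _

lemma hull_ext {f h : ℝ → ℝ}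
    (hiff : ∀ g : ℝ → ℝ, ConvexOn ℝ univ g → ((∀ y, g y ≤ f y) ↔ (∀ y, g y ≤ h y)))
    (x : ℝ) : convHullFn f x = convHullFn h x := by
  unfold convHullFn
  congr 1
  ext v
  constructor
  · rintro ⟨g, hg, hle, rfl⟩; exact ⟨g, hg, (hiff g hg).1 hle, rfl⟩
  · rintro ⟨g, hg, hle, rfl⟩; exact ⟨g, hg, (hiff g hg).2 hle, rfl⟩

lemma hull_add_const {f : ℝ → ℝ} {c : ℝ}
    (hne : ∃ g : ℝ → ℝ, ConvexOn ℝ univ g ∧ ∀ y, g y ≤ f y) (x : ℝ) :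
    convHullFn (fun y => f y + c) x = convHullFn f x + c := by
  have hne' : ∃ g : ℝ → ℝ, ConvexOn ℝ univ g ∧ ∀ y, g y ≤ f y + c := by
    obtain ⟨g, hg, hle⟩ := hne
    exact ⟨fun y => g y + c, hg.add (convexOn_const c convex_univ), fun y => by simpa using add_le_add_right (hle y) c⟩
  apply le_antisymm
  · refine hull_le hne' fun g hg hle => ?_
    have : ∀ y, g y - c ≤ f y := fun y => by linarith [hle y]
    have h2 : ConvexOn ℝ univ (fun y => g y - c) := by
      simpa [sub_eq_add_neg] using (show ConvexOn ℝ univ (fun y => g y + -c) from hg.add (convexOn_const (-c) convex_univ))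
    linarith [le_hull h2 this x]
  · have key : convHullFn f x ≤ convHullFn (fun y => f y + c) x - c := by
      refine hull_le hne fun g hg hle => ?_
      have h2 : ConvexOn ℝ univ (fun y => g y + c) := hg.add (convexOn_const c convex_univ)
      have h3 : ∀ y, (fun y => g y + c) y ≤ f y + c := fun y => by
        simpa using add_le_add_right (hle y) c
      have h4 := le_hull h2 h3 x
      linarith
    linarith

lemma bddAbove_sub_const {u : ℝ → ℝ} {c : ℝ} (h : BddAbove (range u)) :
    BddAbove (range fun k => u k - c) := by
  obtain ⟨M, hM⟩ := h
  exact ⟨M - c, by rintro v ⟨k, rfl⟩; have := hM ⟨k, rfl⟩; simp at this ⊢; linarith⟩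

lemma ciSup_sub_const {u : ℝ → ℝ} {c : ℝ} (h : BddAbove (range u)) :
    (⨆ k, (u k - c)) = (⨆ k, u k) - c := by
  apply le_antisymm
  · exact ciSup_le fun k => by linarith [le_ciSup h k]
  · rw [sub_le_iff_le_add]
    exact ciSup_le fun k => by linarith [le_ciSup (bddAbove_sub_const (c := c) h) k]



def cdfR (η : Measure ℝ) (k : ℝ) : ℝ := (η (Iic k)).toReal

lemma tendsto_slope {η : Measure ℝ} (hη : MemM η) (k : ℝ) :
    Tendsto (fun t : ℝ => (Pput η (k + t) - Pput η k) / t) (𝓝[>] (0:ℝ))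
      (𝓝 (cdfR η k)) := by
  haveI := hη.1
  set f : ℝ → ℝ := (Iic k).indicator (fun _ => (1:ℝ)) with hf
  have hint : ∫ x, f x ∂η = cdfR η k := by
    rw [hf, integral_indicator_const (1:ℝ) measurableSet_Iic]
    simp [cdfR, measureReal_def]
  have main : Tendsto (fun t : ℝ => ∫ x, (max (k + t - x) 0 - max (k - x) 0) / t ∂η)
      (𝓝[>] (0:ℝ)) (𝓝 (∫ x, f x ∂η)) := by
    refine tendsto_integral_filter_of_dominated_convergence (fun _ => (1:ℝ)) ?_ ?_
      (integrable_const 1) ?_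
    · refine Eventually.of_forall fun t => ?_
      exact (Continuous.aestronglyMeasurable (by fun_prop))
    · filter_upwards [self_mem_nhdsWithin] with t (ht : 0 < t)
      refine Eventually.of_forall fun x => ?_
      have h1 : |max (k + t - x) 0 - max (k - x) 0| ≤ |(k + t - x) - (k - x)| :=
        abs_max_sub_max_le_abs _ _ _
      have h2 : |(k + t - x) - (k - x)| = t := by
        rw [show (k + t - x) - (k - x) = t by ring, abs_of_pos ht]
      rw [Real.norm_eq_abs, abs_div, abs_of_pos ht, div_le_one ht]
      rw [h2] at h1; exact h1
    · refine Eventually.of_forall fun x => ?_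
      rcases le_or_gt x k with hx | hx
      · have hfx : f x = 1 := Set.indicator_of_mem (s := Iic k) hx _
        rw [hfx]
        refine Tendsto.congr' ?_ tendsto_const_nhds
        filter_upwards [self_mem_nhdsWithin] with t (ht : 0 < t)
        have e1 : max (k + t - x) 0 = k + t - x := max_eq_left (by linarith)
        have e2 : max (k - x) 0 = k - x := max_eq_left (by linarith)
        rw [e1, e2, show k + t - x - (k - x) = t by ring, div_self ht.ne']
      · have hfx : f x = 0 := Set.indicator_of_notMem (s := Iic k) (not_le.2 hx) _
        rw [hfx]
        refine Tendsto.congr' ?_ tendsto_const_nhds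
        have hmem : Ioo (0:ℝ) (x - k) ∈ 𝓝[>] (0:ℝ) :=
          Ioo_mem_nhdsGT_of_mem ⟨le_refl _, by linarith⟩
        filter_upwards [hmem] with t ht
        have e1 : max (k + t - x) 0 = 0 := max_eq_right (by linarith [ht.2])
        have e2 : max (k - x) 0 = 0 := max_eq_right (by linarith)
        rw [e1, e2]; simp
  rw [hint] at main
  refine main.congr' ?_
  filter_upwards [self_mem_nhdsWithin] with t (ht : 0 < t)
  rw [Pput, Pput, ← integral_sub (int_put hη (k + t)) (int_put hη k), ← integral_div]

lemma cdfR_eq_of_Pput_eq {α β : Measure ℝ} (hα : MemM α) (hβ : MemM β)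
    (h : ∀ k, Pput α k = Pput β k) (k : ℝ) : cdfR α k = cdfR β k := by
  have h1 := tendsto_slope hα k
  have h2 := tendsto_slope hβ k
  simp_rw [h] at h1
  exact tendsto_nhds_unique h1 h2

lemma eq_of_Pput_eq {α β : Measure ℝ} (hα : MemM α) (hβ : MemM β)
    (h : ∀ k, Pput α k = Pput β k) : α = β := by
  haveI := hα.1; haveI := hβ.1
  refine Measure.ext_of_Iic α β fun a => ?_
  have := cdfR_eq_of_Pput_eq hα hβ h a
  exact (ENNReal.toReal_eq_toReal_iff' (measure_ne_top _ _) (measure_ne_top _ _)).1 this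



lemma cdfR_nonneg (η : Measure ℝ) (k : ℝ) : 0 ≤ cdfR η k := ENNReal.toReal_nonneg

lemma cdfR_mono {η : Measure ℝ} (hη : IsFiniteMeasure η) : Monotone (cdfR η) :=
  fun a b hab => ENNReal.toReal_mono (measure_ne_top _ _) (measure_mono (Iic_subset_Iic.2 hab))

lemma ioc_toReal {η : Measure ℝ} (hη : IsFiniteMeasure η) {a b : ℝ} (hab : a ≤ b) :
    (η (Ioc a b)).toReal = cdfR η b - cdfR η a := by
  rw [← Iic_sdiff_Iic, measure_sdiff (Iic_subset_Iic.2 hab) nullMeasurableSet_Iic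
    (measure_ne_top _ _), ENNReal.toReal_sub_of_le (measure_mono (Iic_subset_Iic.2 hab))
    (measure_ne_top _ _)]
  rfl

/-- Main structural lemma: if `Pput ν - Pput S = c + p` with `c` convex, then `S ≤ ν`. -/
lemma le_of_potential {ν S : Measure ℝ} (hν : MemM ν) (hS : MemM S)
    {c : ℝ → ℝ} {p : ℝ} (hcvx : ConvexOn ℝ univ c)
    (heq : ∀ k, Pput ν k - Pput S k = c k + p) : S ≤ ν := by
  haveI := hν.1; haveI := hS.1
  set d : ℝ → ℝ := fun k => cdfR ν k - cdfR S k with hd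
  -- slope of c tends to d
  have h_tend : ∀ a : ℝ, Tendsto (fun t : ℝ => (c (a + t) - c a) / t) (𝓝[>] (0:ℝ)) (𝓝 (d a)) := by
    intro a
    have := (tendsto_slope hν a).sub (tendsto_slope hS a)
    refine this.congr fun t => ?_
    rw [div_sub_div_same]
    congr 1
    have e1 := heq (a + t); have e2 := heq a
    linarith
  -- d is monotone
  have d_mono : Monotone d := by
    intro a b hab
    rcases eq_or_lt_of_le hab with rfl | hlt
    · exact le_refl _
    have H1 : d a ≤ (c b - c a) / (b - a) := by
      refine le_of_tendsto (h_tend a) ?_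
      have hmem : Ioo (0:ℝ) (b - a) ∈ 𝓝[>] (0:ℝ) :=
        Ioo_mem_nhdsGT_of_mem ⟨le_refl _, by linarith⟩
      filter_upwards [hmem] with t ht
      have := hcvx.secant_mono (mem_univ a) (mem_univ (a + t)) (mem_univ b)
        (by linarith [ht.1] : a + t ≠ a) (by linarith : b ≠ a) (by linarith [ht.2])
      simpa [add_sub_cancel_left] using this
    have H2 : (c b - c a) / (b - a) ≤ d b := by
      refine ge_of_tendsto (h_tend b) ?_
      filter_upwards [self_mem_nhdsWithin] with t (ht : 0 < t)
      have := hcvx.secant_mono (mem_univ b) (mem_univ a) (mem_univ (b + t))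
        (by linarith : a ≠ b) (by linarith : b + t ≠ b) (by linarith)
      have e : (c a - c b) / (a - b) = (c b - c a) / (b - a) := by
        rw [show c a - c b = -(c b - c a) by ring, show a - b = -(b - a) by ring, neg_div_neg_eq]
      rw [e] at this
      calc (c b - c a) / (b - a) ≤ (c (b + t) - c b) / (b + t - b) := this
        _ = (c (b + t) - c b) / t := by rw [add_sub_cancel_left]
    exact le_trans H1 H2
  -- increment inequality on Ioc
  have incr : ∀ a b : ℝ, a ≤ b → S (Ioc a b) ≤ ν (Ioc a b) := by
    intro a b hab
    have h1 := d_mono hab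
    rw [hd] at h1
    simp only at h1
    have h2 : (S (Ioc a b)).toReal ≤ (ν (Ioc a b)).toReal := by
      rw [ioc_toReal hS.1 hab, ioc_toReal hν.1 hab]; linarith
    exact (ENNReal.toReal_le_toReal (measure_ne_top _ _) (measure_ne_top _ _)).1 h2
  -- d is nonnegative
  have d_nonneg : ∀ b : ℝ, 0 ≤ d b := by
    intro b
    have hU : (⋃ n : ℕ, Ioc (b - (n:ℝ) - 1) b) = Iic b := by
      ext x
      simp only [mem_iUnion, mem_Ioc, mem_Iic]
      constructor
      · rintro ⟨n, _, h⟩; exact h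
      · intro hx
        obtain ⟨n, hn⟩ := exists_nat_gt (b - x)
        exact ⟨n, by linarith, hx⟩
    have hmono : Monotone fun n : ℕ => Ioc (b - (n:ℝ) - 1) b := by
      intro m n hmn
      apply Ioc_subset_Ioc_left
      have : (m:ℝ) ≤ n := Nat.cast_le.2 hmn
      linarith
    have key : S (Iic b) ≤ ν (Iic b) := by
      have e : S (Iic b) = ⨆ n : ℕ, S (Ioc (b - (n:ℝ) - 1) b) := by
        rw [← hU, hmono.measure_iUnion]
      rw [e]
      refine iSup_le fun n => ?_
      exact le_trans (incr _ _ (by linarith [Nat.cast_nonneg (α := ℝ) n]))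
        (measure_mono Ioc_subset_Iic_self)
    have := ENNReal.toReal_mono (measure_ne_top _ _) key
    simp only [hd]
    exact sub_nonneg.2 this
  -- right continuity of d
  have d_rc : ∀ a : ℝ, ContinuousWithinAt d (Ici a) a := by
    intro a
    rw [Metric.continuousWithinAt_iff]
    intro ε hε
    have hnull : ∀ n : ℕ, NullMeasurableSet (Ioc a (a + 1 / ((n:ℝ) + 1))) ν :=
      fun n => measurableSet_Ioc.nullMeasurableSet
    have hanti : Antitone fun n : ℕ => Ioc a (a + 1 / ((n:ℝ) + 1)) := by
      intro m n hmn
      apply Ioc_subset_Ioc_right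
      have h1 : (m:ℝ) + 1 ≤ (n:ℝ) + 1 := by
        have : (m:ℝ) ≤ n := Nat.cast_le.2 hmn
        linarith
      have := one_div_le_one_div_of_le (by positivity : (0:ℝ) < (m:ℝ) + 1) h1
      linarith
    have hiInter : (⋂ n : ℕ, Ioc a (a + 1 / ((n:ℝ) + 1))) = ∅ := by
      rw [eq_empty_iff_forall_notMem]
      intro x hx
      simp only [mem_iInter, mem_Ioc] at hx
      obtain ⟨n, hn⟩ := exists_nat_one_div_lt (show (0:ℝ) < x - a by linarith [(hx 0).1])
      have h2 := (hx n).2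
      push_cast at hn
      linarith
    have htd : Tendsto (fun n : ℕ => (ν (Ioc a (a + 1 / ((n:ℝ) + 1)))).toReal) atTop (𝓝 0) := by
      have h0 : Tendsto (fun n : ℕ => ν (Ioc a (a + 1 / ((n:ℝ) + 1)))) atTop
          (𝓝 (ν (⋂ n : ℕ, Ioc a (a + 1 / ((n:ℝ) + 1))))) :=
        tendsto_measure_iInter_atTop hnull hanti ⟨0, measure_ne_top _ _⟩
      rw [hiInter] at h0
      simp only [measure_empty] at h0
      exact (ENNReal.tendsto_toReal ENNReal.zero_ne_top).comp h0
    have : ∀ᶠ n : ℕ in atTop, (ν (Ioc a (a + 1 / ((n:ℝ) + 1)))).toReal < ε := by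
      have := (Metric.tendsto_nhds.1 htd) ε hε
      simpa [Real.dist_eq, abs_of_nonneg ENNReal.toReal_nonneg] using this
    obtain ⟨n, hn⟩ := this.exists
    refine ⟨1 / ((n:ℝ) + 1), by positivity, fun b hb hdist => ?_⟩
    have hab : a ≤ b := hb
    have hdd : 0 ≤ d b - d a := sub_nonneg.2 (d_mono hab)
    rw [Real.dist_eq, abs_of_nonneg hdd]
    have hSincr : 0 ≤ cdfR S b - cdfR S a := sub_nonneg.2 (cdfR_mono hS.1 hab)
    have hsub : Ioc a b ⊆ Ioc a (a + 1 / ((n:ℝ) + 1)) := by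
      apply Ioc_subset_Ioc_right
      rw [Real.dist_eq, abs_of_nonneg (by linarith : (0:ℝ) ≤ b - a)] at hdist
      linarith
    have h5 : cdfR ν b - cdfR ν a ≤ (ν (Ioc a (a + 1 / ((n:ℝ) + 1)))).toReal := by
      rw [← ioc_toReal hν.1 hab]
      exact ENNReal.toReal_mono (measure_ne_top _ _) (measure_mono hsub)
    simp only [hd]
    linarith
  -- d tends to 0 at -infty
  have d_bot : Tendsto d atBot (𝓝 0) := by
    rw [Metric.tendsto_nhds]
    intro ε hε
    have hnull : ∀ n : ℕ, NullMeasurableSet (Iic (-(n:ℝ))) ν :=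
      fun n => measurableSet_Iic.nullMeasurableSet
    have hanti : Antitone fun n : ℕ => Iic (-(n:ℝ)) := by
      intro m n hmn
      apply Iic_subset_Iic.2
      have : (m:ℝ) ≤ n := Nat.cast_le.2 hmn
      linarith
    have hiInter : (⋂ n : ℕ, Iic (-(n:ℝ))) = ∅ := by
      ext x
      simp only [mem_iInter, mem_Iic, mem_empty_iff_false, iff_false, not_forall, not_le]
      obtain ⟨n, hn⟩ := exists_nat_gt (-x)
      exact ⟨n, by linarith⟩
    have htd : Tendsto (fun n : ℕ => (ν (Iic (-(n:ℝ)))).toReal) atTop (𝓝 0) := by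
      have h0 : Tendsto (fun n : ℕ => ν (Iic (-(n:ℝ)))) atTop
          (𝓝 (ν (⋂ n : ℕ, Iic (-(n:ℝ))))) :=
        tendsto_measure_iInter_atTop hnull hanti ⟨0, measure_ne_top _ _⟩
      rw [hiInter] at h0
      simp only [measure_empty] at h0
      exact (ENNReal.tendsto_toReal ENNReal.zero_ne_top).comp h0
    have hev : ∀ᶠ n : ℕ in atTop, (ν (Iic (-(n:ℝ)))).toReal < ε := by
      have := (Metric.tendsto_nhds.1 htd) ε hε
      simpa [Real.dist_eq, abs_of_nonneg ENNReal.toReal_nonneg] using this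
    obtain ⟨n, hn⟩ := hev.exists
    rw [eventually_atBot]
    refine ⟨-(n:ℝ), fun k hk => ?_⟩
    rw [Real.dist_eq, sub_zero, abs_of_nonneg (d_nonneg k)]
    have h1 : d k ≤ cdfR ν k := by
      simp only [hd]
      linarith [cdfR_nonneg S k]
    have h2 : cdfR ν k ≤ cdfR ν (-(n:ℝ)) := cdfR_mono hν.1 hk
    calc d k ≤ cdfR ν (-(n:ℝ)) := le_trans h1 h2
      _ < ε := hn
  -- build the Stieltjes measure
  set G : StieltjesFunction ℝ := ⟨d, d_mono, d_rc⟩ with hG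
  set ρ : Measure ℝ := G.measure with hρ
  have hρIic : ∀ x : ℝ, ρ (Iic x) = ENNReal.ofReal (d x) := by
    intro x
    rw [hρ, G.measure_Iic d_bot x]
    simp
    rfl
  have hsum : ν = S + ρ := by
    refine Measure.ext_of_Iic ν (S + ρ) fun a => ?_
    rw [Measure.add_apply, hρIic a]
    have h1 : S (Iic a) = ENNReal.ofReal (cdfR S a) := by
      rw [cdfR, ENNReal.ofReal_toReal (measure_ne_top _ _)]
    have h2 : ν (Iic a) = ENNReal.ofReal (cdfR ν a) := by
      rw [cdfR, ENNReal.ofReal_toReal (measure_ne_top _ _)]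
    rw [h1, h2, ← ENNReal.ofReal_add (cdfR_nonneg S a) (d_nonneg a)]
    congr 1
    simp only [hd]
    ring
  rw [hsum]
  exact Measure.le_add_right (le_refl S)


end Aux

theorem stmt_6 (μ₁ μ₂ ν S S₁ S₂ : Measure ℝ)
    (h1 : MemM μ₁) (h2 : MemM μ₂) (hν : MemM ν)
    (hmass : mass (μ₁ + μ₂) ≤ mass ν)
    (hS : IsShadow (μ₁ + μ₂) ν S) (hS1 : IsShadow μ₁ ν S₁)
    (hS2 : IsShadow μ₂ (ν - S₁) S₂) :
    S = S₁ + S₂ ∧ pconst (μ₁ + μ₂) ν = pconst μ₁ ν + pconst μ₂ (ν - S₁) := by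
  classical
  obtain ⟨hMS, hPS⟩ := hS
  obtain ⟨hMS1, hPS1⟩ := hS1
  obtain ⟨hMS2, hPS2⟩ := hS2
  haveI := hν.1; haveI := h1.1; haveI := h2.1
  haveI := hMS.1; haveI := hMS1.1; haveI := hMS2.1
  have hμ : MemM (μ₁ + μ₂) := Aux.memM_add h1 h2
  -- notation
  set f₁ : ℝ → ℝ := fun t => Pput ν t - Pput μ₁ t with hf₁
  set f : ℝ → ℝ := fun t => Pput ν t - (Pput μ₁ t + Pput μ₂ t) with hf
  set p : ℝ := pconst (μ₁ + μ₂) ν with hpdef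
  set p₁ : ℝ := pconst μ₁ ν with hp₁def
  -- mass facts
  have hmadd : mass (μ₁ + μ₂) = mass μ₁ + mass μ₂ := Aux.mass_add h1 h2
  have hm1 : mass μ₁ ≤ mass ν := by
    have := Aux.mass_nonneg μ₂; linarith [hmass, hmadd.symm.le, hmadd.le]
  -- boundedness of the sup defining p and p₁
  have bdd : BddAbove (range fun k => Pput (μ₁ + μ₂) k - Pput ν k) :=
    Aux.bddAbove_Pput_sub hμ hν hmass
  have hp : ∀ k, Pput μ₁ k + Pput μ₂ k - Pput ν k ≤ p := by
    intro k
    have := le_ciSup bdd k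
    rw [Aux.Pput_add h1 h2] at this
    exact this
  have bdd₁ : BddAbove (range fun k => Pput μ₁ k - Pput ν k) :=
    Aux.bddAbove_Pput_sub h1 hν hm1
  have hp₁ : ∀ k, Pput μ₁ k - Pput ν k ≤ p₁ := fun k => le_ciSup bdd₁ k
  -- minorants
  have hne₁ : ∃ g : ℝ → ℝ, ConvexOn ℝ univ g ∧ ∀ y, g y ≤ f₁ y :=
    ⟨fun _ => -p₁, convexOn_const _ convex_univ, fun y => by
      simp only [hf₁]; linarith [hp₁ y]⟩
  set c₁ : ℝ → ℝ := convHullFn f₁ with hc₁def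
  have hc₁_le : ∀ x, c₁ x ≤ f₁ x := fun x => Aux.hull_le_self hne₁ x
  have hc₁cvx : ConvexOn ℝ univ c₁ := Aux.hull_convex hne₁
  have hg₂cvx : ConvexOn ℝ univ (fun y => Pput μ₂ y + (-p)) :=
    (Aux.Pput_convex h2).add (convexOn_const _ convex_univ)
  have hP₂p : ∀ y, Pput μ₂ y - p ≤ c₁ y := by
    intro y
    have hmin : ∀ z, (fun y => Pput μ₂ y + (-p)) z ≤ f₁ z := by
      intro z
      simp only [hf₁]
      linarith [hp z]
    have := Aux.le_hull hg₂cvx hmin y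
    simpa [sub_eq_add_neg] using this
  -- S₁ ≤ ν
  have hle : S₁ ≤ ν := by
    refine Aux.le_of_potential hν hMS1 hc₁cvx (p := p₁) fun k => ?_
    have := hPS1 k
    rw [hp₁def] at this ⊢
    linarith [this]
  have hsub : ν - S₁ + S₁ = ν := Measure.sub_add_cancel_of_le hle
  have hMνS : MemM (ν - S₁) :=
    ⟨MeasureTheory.isFiniteMeasure_of_le ν Measure.sub_le, hν.2.mono_measure Measure.sub_le⟩
  have hQ : ∀ k, Pput (ν - S₁) k = c₁ k + p₁ := by
    intro k
    have hadd := Aux.Pput_add hMνS (⟨hMS1.1, hMS1.2⟩ : MemM S₁) k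
    rw [hsub] at hadd
    have h2' := hPS1 k
    linarith
  -- the quantity A
  have bddA : BddAbove (range fun k => Pput μ₂ k - c₁ k) := by
    refine ⟨p, ?_⟩
    rintro v ⟨k, rfl⟩
    have := hP₂p k
    simpa using by linarith [hP₂p k]
  have hA_le_p : (⨆ k : ℝ, (Pput μ₂ k - c₁ k)) ≤ p := by
    refine ciSup_le fun k => ?_
    linarith [hP₂p k]
  have hp_le_A : p ≤ ⨆ k : ℝ, (Pput μ₂ k - c₁ k) := by
    rw [hpdef]
    show (⨆ k : ℝ, (Pput (μ₁ + μ₂) k - Pput ν k)) ≤ _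
    refine ciSup_le fun k => ?_
    have e := Aux.Pput_add h1 h2 k
    have h3 := hc₁_le k
    simp only [hf₁] at h3
    have h4 : Pput (μ₁ + μ₂) k - Pput ν k ≤ Pput μ₂ k - c₁ k := by linarith
    exact le_trans h4 (le_ciSup bddA k)
  have hA : (⨆ k : ℝ, (Pput μ₂ k - c₁ k)) = p := le_antisymm hA_le_p hp_le_A
  -- p₂
  have hp₂ : pconst μ₂ (ν - S₁) = p - p₁ := by
    have e1 : pconst μ₂ (ν - S₁) = ⨆ k : ℝ, ((Pput μ₂ k - c₁ k) - p₁) := by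
      rw [pconst]
      refine iSup_congr fun k => ?_
      rw [hQ k]; ring
    rw [e1, Aux.ciSup_sub_const bddA, hA]
  -- hull identity
  have hullEq : ∀ k, convHullFn (fun t => Pput (ν - S₁) t - Pput μ₂ t) k
      = convHullFn f k + p₁ := by
    intro k
    have e : (fun t => Pput (ν - S₁) t - Pput μ₂ t)
        = fun t => (c₁ t - Pput μ₂ t) + p₁ := by
      funext t; rw [hQ t]; ring
    rw [e]
    have hne_h : ∃ g : ℝ → ℝ, ConvexOn ℝ univ g ∧ ∀ y, g y ≤ c₁ y - Pput μ₂ y :=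
      ⟨fun _ => -p, convexOn_const _ convex_univ, fun y => by
        show -p ≤ c₁ y - Pput μ₂ y; linarith [hP₂p y]⟩
    rw [Aux.hull_add_const hne_h k]
    congr 1
    refine Aux.hull_ext (fun g hg => ?_) k
    constructor
    · intro hle' y
      have := hle' y
      have h3 := hc₁_le y
      simp only [hf₁] at h3
      simp only [hf]
      linarith
    · intro hle' y
      have hgP : ConvexOn ℝ univ (fun y => g y + Pput μ₂ y) := hg.add (Aux.Pput_convex h2)
      have hgPm : ∀ z, (fun y => g y + Pput μ₂ y) z ≤ f₁ z := by
        intro z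
        have := hle' z
        simp only [hf] at this
        simp only [hf₁]
        linarith
      have := Aux.le_hull hgP hgPm y
      linarith
  -- second goal
  have goal2 : pconst (μ₁ + μ₂) ν = pconst μ₁ ν + pconst μ₂ (ν - S₁) := by
    rw [hp₂, ← hpdef, ← hp₁def]; ring
  refine ⟨?_, goal2⟩
  -- first goal via equality of potentials
  have hMsum : MemM (S₁ + S₂) := Aux.memM_add ⟨hMS1.1, hMS1.2⟩ ⟨hMS2.1, hMS2.2⟩
  refine Aux.eq_of_Pput_eq ⟨hMS.1, hMS.2⟩ hMsum fun k => ?_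
  rw [Aux.Pput_add ⟨hMS1.1, hMS1.2⟩ ⟨hMS2.1, hMS2.2⟩ k]
  have e2 : (fun t => Pput ν t - Pput (μ₁ + μ₂) t) = f := by
    funext t; rw [Aux.Pput_add h1 h2 t, hf]
  have hSk := hPS k
  rw [e2] at hSk
  have hS1k := hPS1 k
  have hS2k := hPS2 k
  rw [hullEq k, hQ k, hp₂] at hS2k
  rw [hSk, hS1k, hS2k]
  ring

end
end

section
/- Let μ, ν ∈ 𝓜 with μ(ℝ) = ν(ℝ). If μ ≤_cd ν, then for every supermartingale coupling π ∈ Π_Sup(μ,ν) one has V(μ,ν) = ∫ |x − π̄_x| μ(dx) = |μ̄ − ν̄| = μ̄ − ν̄. Symmetrically, if μ ≤_ci ν, then for every submartingale coupling π ∈ Π_Sub(μ,ν) one has V(μ,ν) = ∫ |x − π̄_x| μ(dx) = |μ̄ − ν̄| = ν̄ − μ̄. -/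
open MeasureTheory Set Filter

noncomputable section

/-!
Disintegrating any coupling gives `∫ π̄_x μ(dx) = ν̄`, so `μ̄ - ν̄ = ∫ (x - π̄_x) μ(dx)` and
`|μ̄ - ν̄| ≤ ∫ |x - π̄_x| μ(dx)`: the mean gap bounds the cost of every coupling from below.
For a supermartingale (submartingale) coupling `x - π̄_x` has a constant sign, so this bound is
attained and the coupling is optimal.
-/

lemma bar_eq_integral_condKernel (π : Measure (ℝ × ℝ)) [IsFiniteMeasure π] :
    bar π = fun x => ∫ y, y ∂(π.condKernel x) :=
  funext fun _ => dif_pos ‹_›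

namespace IsCoupling

variable {μ ν : Measure ℝ} {π : Measure (ℝ × ℝ)}

lemma isFiniteMeasure (hc : IsCoupling μ ν π) [IsFiniteMeasure μ] : IsFiniteMeasure π :=
  ⟨by rw [← Measure.fst_univ, hc.1]; exact measure_lt_top μ univ⟩

lemma integrable_snd (hc : IsCoupling μ ν π) (hν : Integrable (fun y => y) ν) :
    Integrable (fun p : ℝ × ℝ => p.2) π := by
  rw [← hc.2, Measure.snd] at hν
  exact (integrable_map_measure aestronglyMeasurable_id measurable_snd.aemeasurable).1 hν

lemma integrable_bar (hc : IsCoupling μ ν π) [IsFiniteMeasure μ]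
    (hν : Integrable (fun y => y) ν) : Integrable (bar π) μ := by
  have := hc.isFiniteMeasure
  rw [bar_eq_integral_condKernel, ← hc.1]
  exact (hc.integrable_snd hν).integral_condKernel

lemma integral_bar (hc : IsCoupling μ ν π) [IsFiniteMeasure μ]
    (hν : Integrable (fun y => y) ν) : ∫ x, bar π x ∂μ = mean ν := by
  have := hc.isFiniteMeasure
  rw [bar_eq_integral_condKernel, ← hc.1, Measure.integral_condKernel (hc.integrable_snd hν),
    mean, ← hc.2, Measure.snd,
    integral_map (f := fun y => y) measurable_snd.aemeasurable aestronglyMeasurable_id]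

lemma integral_sub_bar (hc : IsCoupling μ ν π) [IsFiniteMeasure μ]
    (hμ : Integrable (fun x => x) μ) (hν : Integrable (fun y => y) ν) :
    ∫ x, (x - bar π x) ∂μ = mean μ - mean ν := by
  rw [integral_sub hμ (hc.integrable_bar hν), hc.integral_bar hν]; rfl

lemma abs_mean_sub_le_WOTcost (hc : IsCoupling μ ν π) [IsFiniteMeasure μ]
    (hμ : Integrable (fun x => x) μ) (hν : Integrable (fun y => y) ν) :
    |mean μ - mean ν| ≤ WOTcost μ π := by
  rw [← hc.integral_sub_bar hμ hν]
  exact abs_integral_le_integral_abs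

lemma V_eq_WOTcost (hc : IsCoupling μ ν π) [IsFiniteMeasure μ]
    (hμ : Integrable (fun x => x) μ) (hν : Integrable (fun y => y) ν)
    (hopt : WOTcost μ π = |mean μ - mean ν|) : V μ ν = WOTcost μ π := by
  have hlb : WOTcost μ π ∈ lowerBounds {r | ∃ π', IsCoupling μ ν π' ∧ r = WOTcost μ π'} := by
    rintro _ ⟨π', hc', rfl⟩
    exact hopt ▸ hc'.abs_mean_sub_le_WOTcost hμ hν
  exact IsLeast.csInf_eq ⟨⟨π, hc, rfl⟩, hlb⟩

end IsCoupling

lemma IsSupCoupling.WOTcost_eq {μ ν : Measure ℝ} {π : Measure (ℝ × ℝ)}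
    (hπ : IsSupCoupling μ ν π) [IsFiniteMeasure μ] (hμ : Integrable (fun x => x) μ)
    (hν : Integrable (fun y => y) ν) : WOTcost μ π = mean μ - mean ν := by
  rw [← hπ.1.integral_sub_bar hμ hν]
  refine integral_congr_ae ?_
  filter_upwards [hπ.2] with x hx
  exact abs_of_nonneg (sub_nonneg.2 hx)

lemma IsSubCoupling.WOTcost_eq {μ ν : Measure ℝ} {π : Measure (ℝ × ℝ)}
    (hπ : IsSubCoupling μ ν π) [IsFiniteMeasure μ] (hμ : Integrable (fun x => x) μ)
    (hν : Integrable (fun y => y) ν) : WOTcost μ π = mean ν - mean μ := by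
  rw [← neg_sub, ← hπ.1.integral_sub_bar hμ hν, ← integral_neg]
  refine integral_congr_ae ?_
  filter_upwards [hπ.2] with x hx
  exact abs_of_nonpos (sub_nonpos.2 hx)

theorem stmt_9_general (μ ν : Measure ℝ) (hμ : MemM μ) (hν : MemM ν) :
    (CdOrder μ ν → ∀ π, IsSupCoupling μ ν π →
      V μ ν = WOTcost μ π ∧ WOTcost μ π = |mean μ - mean ν| ∧
      |mean μ - mean ν| = mean μ - mean ν) ∧
    (CiOrder μ ν → ∀ π, IsSubCoupling μ ν π →
      V μ ν = WOTcost μ π ∧ WOTcost μ π = |mean μ - mean ν| ∧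
      |mean μ - mean ν| = mean ν - mean μ) := by
  have := hμ.1
  constructor
  · intro _ π hπ
    have hcost := hπ.WOTcost_eq hμ.2 hν.2
    have habs : |mean μ - mean ν| = mean μ - mean ν :=
      abs_of_nonneg (hcost ▸ integral_nonneg fun _ => abs_nonneg _)
    have hopt : WOTcost μ π = |mean μ - mean ν| := hcost.trans habs.symm
    exact ⟨hπ.1.V_eq_WOTcost hμ.2 hν.2 hopt, hopt, habs⟩
  · intro _ π hπ
    have hcost := hπ.WOTcost_eq hμ.2 hν.2
    have habs : |mean μ - mean ν| = mean ν - mean μ := by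
      rw [abs_sub_comm]
      exact abs_of_nonneg (hcost ▸ integral_nonneg fun _ => abs_nonneg _)
    have hopt : WOTcost μ π = |mean μ - mean ν| := hcost.trans habs.symm
    exact ⟨hπ.1.V_eq_WOTcost hμ.2 hν.2 hopt, hopt, habs⟩

theorem stmt_9 (μ ν : Measure ℝ) (hμ : MemM μ) (hν : MemM ν)
    (hmass : mass μ = mass ν) :
    (CdOrder μ ν → ∀ π, IsSupCoupling μ ν π →
      V μ ν = WOTcost μ π ∧ WOTcost μ π = |mean μ - mean ν| ∧
      |mean μ - mean ν| = mean μ - mean ν) ∧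
    (CiOrder μ ν → ∀ π, IsSubCoupling μ ν π →
      V μ ν = WOTcost μ π ∧ WOTcost μ π = |mean μ - mean ν| ∧
      |mean μ - mean ν| = mean ν - mean μ) :=
  stmt_9_general μ ν hμ hν
end
end

section
/- Let μ, ν ∈ 𝓜 with μ(ℝ) ≤ ν(ℝ). The second distributional derivative of k ↦ (P_ν − P_μ)^c(k) is a unique measure θ_{μ,ν} ∈ 𝓜; equivalently, k ↦ (P_ν − P_μ)^c(k) + p_{μ,ν} is the put potential P_{θ_{μ,ν}} of a unique measure θ_{μ,ν} ∈ 𝓜, and this measure satisfies θ_{μ,ν}(ℝ) = ν(ℝ) − μ(ℝ) and mean(θ_{μ,ν}) = ν̄ − μ̄ + c_{μ,ν} − p_{μ,ν}. -/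
open MeasureTheory Set Filter
open Topology
open scoped ENNReal

noncomputable section

set_option linter.unusedSectionVars false
set_option linter.unusedVariables false

section basic
variable {η : Measure ℝ} (hη : MemM η)
include hη

lemma integrable_put (k : ℝ) : Integrable (fun x => max (k - x) 0) η := by
  have : IsFiniteMeasure η := hη.1
  refine Integrable.mono' ((integrable_const |k|).add hη.2.abs) ?_ ?_
  · exact (continuous_const.sub continuous_id).max continuous_const |>.aestronglyMeasurable
  · refine ae_of_all _ fun x => ?_
    simp only [Pi.add_apply]
    rw [Real.norm_eq_abs, abs_of_nonneg (le_max_right _ _)]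
    have h1 : k ≤ |k| := le_abs_self k
    have h2 : -x ≤ |x| := neg_le_abs x
    have h3 : (0:ℝ) ≤ |k| + |x| := by positivity
    exact max_le (by linarith) h3

lemma integrable_call (k : ℝ) : Integrable (fun x => max (x - k) 0) η := by
  have : IsFiniteMeasure η := hη.1
  refine Integrable.mono' ((integrable_const |k|).add hη.2.abs) ?_ ?_
  · exact (continuous_id.sub continuous_const).max continuous_const |>.aestronglyMeasurable
  · refine ae_of_all _ fun x => ?_
    simp only [Pi.add_apply]
    rw [Real.norm_eq_abs, abs_of_nonneg (le_max_right _ _)]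
    have h1 : x ≤ |x| := le_abs_self x
    have h2 : -k ≤ |k| := neg_le_abs k
    have h3 : (0:ℝ) ≤ |k| + |x| := by positivity
    exact max_le (by linarith) h3

lemma put_nonneg (k : ℝ) : 0 ≤ Pput η k :=
  integral_nonneg fun x => le_max_right _ _

lemma call_nonneg (k : ℝ) : 0 ≤ Ccall η k :=
  integral_nonneg fun x => le_max_right _ _

lemma put_mono : Monotone (Pput η) := by
  intro a b hab
  exact integral_mono (integrable_put hη a) (integrable_put hη b)
    (fun x => max_le_max (by linarith) le_rfl)

lemma call_anti : Antitone (Ccall η) := by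
  intro a b hab
  exact integral_mono (integrable_call hη b) (integrable_call hη a)
    (fun x => max_le_max (by linarith) le_rfl)

/-- put-call parity -/
lemma parity (k : ℝ) : Pput η k - Ccall η k = mass η * k - mean η := by
  have : IsFiniteMeasure η := hη.1
  have h1 : Pput η k - Ccall η k = ∫ x, (max (k - x) 0 - max (x - k) 0) ∂η := by
    rw [integral_sub (integrable_put hη k) (integrable_call hη k)]; rfl
  have h2 : ∀ x : ℝ, max (k - x) 0 - max (x - k) 0 = k - x := by
    intro x
    rcases le_total x k with h | h
    · rw [max_eq_left (by linarith), max_eq_right (by linarith)]; ring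
    · rw [max_eq_right (by linarith), max_eq_left (by linarith)]; ring
  rw [h1]
  simp_rw [h2]
  rw [integral_sub (integrable_const k) hη.2, integral_const]
  simp [mass, mean, mul_comm, Measure.real]

lemma put_le_intabs {k : ℝ} (hk : k ≤ 0) : Pput η k ≤ ∫ x, |x| ∂η := by
  refine integral_mono (integrable_put hη k) hη.2.abs fun x => ?_
  rcases le_total x k with h | h
  · rw [max_eq_left (by linarith)]
    have hx : x ≤ 0 := h.trans hk
    have : |x| = -x := abs_of_nonpos hx
    linarith
  · rw [max_eq_right (by linarith)]; positivity

lemma call_le_intabs {k : ℝ} (hk : 0 ≤ k) : Ccall η k ≤ ∫ x, |x| ∂η := by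
  refine integral_mono (integrable_call hη k) hη.2.abs fun x => ?_
  rcases le_total k x with h | h
  · rw [max_eq_left (by linarith)]
    have hx : 0 ≤ x := hk.trans h
    have : |x| = x := abs_of_nonneg hx
    linarith
  · rw [max_eq_right (by linarith)]; positivity

lemma call_tendsto_atTop : Tendsto (Ccall η) atTop (nhds 0) := by
  have : IsFiniteMeasure η := hη.1
  have h0 : (0:ℝ) = ∫ x, (0:ℝ) ∂η := by simp
  rw [h0]
  refine tendsto_integral_filter_of_dominated_convergence (fun x => |x|) ?_ ?_ hη.2.abs ?_
  · exact Eventually.of_forall fun k =>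
      ((continuous_id.sub continuous_const).max continuous_const).aestronglyMeasurable
  · filter_upwards [eventually_ge_atTop (0:ℝ)] with k hk
    refine ae_of_all _ fun x => ?_
    rw [Real.norm_eq_abs, abs_of_nonneg (le_max_right _ _)]
    have h1 : x ≤ |x| := le_abs_self x
    exact max_le (by linarith) (by positivity)
  · refine ae_of_all _ fun x => ?_
    have h : ∀ᶠ k in atTop, max (x - k) 0 = 0 := by
      filter_upwards [eventually_ge_atTop x] with k hk
      exact max_eq_right (by linarith)
    exact Tendsto.congr' (h.mono fun k hk => hk.symm) tendsto_const_nhds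

lemma put_tendsto_atBot : Tendsto (Pput η) atBot (nhds 0) := by
  have : IsFiniteMeasure η := hη.1
  have h0 : (0:ℝ) = ∫ x, (0:ℝ) ∂η := by simp
  rw [h0]
  refine tendsto_integral_filter_of_dominated_convergence (fun x => |x|) ?_ ?_ hη.2.abs ?_
  · exact Eventually.of_forall fun k =>
      ((continuous_const.sub continuous_id).max continuous_const).aestronglyMeasurable
  · filter_upwards [eventually_le_atBot (0:ℝ)] with k hk
    refine ae_of_all _ fun x => ?_
    rw [Real.norm_eq_abs, abs_of_nonneg (le_max_right _ _)]
    have h2 : -x ≤ |x| := neg_le_abs x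
    exact max_le (by linarith) (by positivity)
  · refine ae_of_all _ fun x => ?_
    have h : ∀ᶠ k in atBot, max (k - x) 0 = 0 := by
      filter_upwards [eventually_le_atBot x] with k hk
      exact max_eq_right (by linarith)
    exact Tendsto.congr' (h.mono fun k hk => hk.symm) tendsto_const_nhds

end basic

section consts


variable {μ ν : Measure ℝ} (hμ : MemM μ) (hν : MemM ν) (hmass : mass μ ≤ mass ν)
include hμ hν hmass

lemma pdiff_bdd : BddAbove (range fun k => Pput μ k - Pput ν k) := by
  refine ⟨(∫ x, |x| ∂μ) + |mean ν - mean μ|, ?_⟩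
  rintro v ⟨k, rfl⟩
  simp only
  rcases le_total k 0 with hk | hk
  · have h1 := put_le_intabs hμ hk
    have h2 := put_nonneg hν k
    have h3 : (0:ℝ) ≤ |mean ν - mean μ| := abs_nonneg _
    linarith
  · have e1 := parity hμ k
    have e2 := parity hν k
    have h1 : Ccall μ k ≤ ∫ x, |x| ∂μ := call_le_intabs hμ hk
    have h2 : 0 ≤ Ccall ν k := call_nonneg hν k
    have h3 : mass μ * k ≤ mass ν * k := mul_le_mul_of_nonneg_right hmass hk
    have h4 : mean ν - mean μ ≤ |mean ν - mean μ| := le_abs_self _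
    -- Pμ - Pν = Cμ - Cν + (massμ - massν) k + (mean ν - mean μ)
    nlinarith
lemma cdiff_bdd : BddAbove (range fun k => Ccall μ k - Ccall ν k) := by
  refine ⟨(∫ x, |x| ∂μ) + |mean μ - mean ν|, ?_⟩
  rintro v ⟨k, rfl⟩
  simp only
  rcases le_total 0 k with hk | hk
  · have h1 := call_le_intabs hμ hk
    have h2 := call_nonneg hν k
    have h3 : (0:ℝ) ≤ |mean μ - mean ν| := abs_nonneg _
    linarith
  · have e1 := parity hμ k
    have e2 := parity hν k
    have h1 : Pput μ k ≤ ∫ x, |x| ∂μ := put_le_intabs hμ hk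
    have h2 : 0 ≤ Pput ν k := put_nonneg hν k
    have h3 : mass ν * k ≤ mass μ * k := mul_le_mul_of_nonpos_right hmass hk
    have h4 : mean μ - mean ν ≤ |mean μ - mean ν| := le_abs_self _
    nlinarith

lemma le_pconst (k : ℝ) : Pput μ k - Pput ν k ≤ pconst μ ν :=
  le_ciSup (pdiff_bdd hμ hν hmass) k

lemma le_cconst (k : ℝ) : Ccall μ k - Ccall ν k ≤ cconst μ ν :=
  le_ciSup (cdiff_bdd hμ hν hmass) k

lemma pconst_approx {ε : ℝ} (hε : 0 < ε) : ∃ k, pconst μ ν - ε < Pput μ k - Pput ν k := by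
  obtain ⟨k, hk⟩ := exists_lt_of_lt_ciSup (show pconst μ ν - ε < pconst μ ν by linarith)
  exact ⟨k, hk⟩

lemma cconst_approx {ε : ℝ} (hε : 0 < ε) : ∃ k, cconst μ ν - ε < Ccall μ k - Ccall ν k := by
  obtain ⟨k, hk⟩ := exists_lt_of_lt_ciSup (show cconst μ ν - ε < cconst μ ν by linarith)
  exact ⟨k, hk⟩

end consts

section hull
variable {f : ℝ → ℝ}

def hullSet (f : ℝ → ℝ) (x : ℝ) : Set ℝ :=
  {v : ℝ | ∃ g : ℝ → ℝ, ConvexOn ℝ univ g ∧ (∀ y, g y ≤ f y) ∧ v = g x}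

lemma convHullFn_eq (x : ℝ) : convHullFn f x = sSup (hullSet f x) := rfl

lemma hullSet_bddAbove (x : ℝ) : BddAbove (hullSet f x) := by
  refine ⟨f x, ?_⟩
  rintro v ⟨g, hg, hgf, rfl⟩
  exact hgf x

variable (hmin : ∃ g₀ : ℝ → ℝ, ConvexOn ℝ univ g₀ ∧ ∀ y, g₀ y ≤ f y)
include hmin

lemma hullSet_nonempty (x : ℝ) : (hullSet f x).Nonempty := by
  obtain ⟨g₀, hc, hle⟩ := hmin
  exact ⟨g₀ x, g₀, hc, hle, rfl⟩

lemma convHullFn_le_self (x : ℝ) : convHullFn f x ≤ f x :=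
  csSup_le (hullSet_nonempty hmin x) (by rintro v ⟨g, hg, hgf, rfl⟩; exact hgf x)

lemma le_convHullFn {g : ℝ → ℝ} (hg : ConvexOn ℝ univ g) (hgf : ∀ y, g y ≤ f y) (x : ℝ) :
    g x ≤ convHullFn f x :=
  le_csSup (hullSet_bddAbove x) ⟨g, hg, hgf, rfl⟩

lemma convexOn_convHullFn : ConvexOn ℝ univ (convHullFn f) := by
  refine ⟨convex_univ, fun x _ y _ a b ha hb hab => ?_⟩
  refine csSup_le (hullSet_nonempty hmin _) ?_
  rintro v ⟨g, hg, hgf, rfl⟩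
  calc g (a • x + b • y) ≤ a • g x + b • g y := hg.2 (mem_univ x) (mem_univ y) ha hb hab
    _ ≤ a • convHullFn f x + b • convHullFn f y := by
        have h1 : g x ≤ convHullFn f x := le_convHullFn hmin hg hgf x
        have h2 : g y ≤ convHullFn f y := le_convHullFn hmin hg hgf y
        simp only [smul_eq_mul]
        nlinarith
end hull

/-- affine functions are convex -/
lemma convexOn_affine (c d : ℝ) : ConvexOn ℝ univ (fun x : ℝ => c * x + d) := by
  refine ⟨convex_univ, fun x _ y _ a b ha hb hab => ?_⟩
  simp only [smul_eq_mul]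
  have : a * (c * x + d) + b * (c * y + d) = c * (a * x + b * y) + (a + b) * d := by ring
  rw [this, hab, one_mul]

/-- a convex function on ℝ bounded above on `Iic x₀` is monotone -/
lemma ConvexOn.monotone_of_bddAbove_Iic {g : ℝ → ℝ} (hg : ConvexOn ℝ univ g) {x₀ B : ℝ}
    (hB : ∀ x ≤ x₀, g x ≤ B) : Monotone g := by
  intro x y hxy
  rcases eq_or_lt_of_le hxy with rfl | hxy
  · exact le_rfl
  by_contra hlt
  push_neg at hlt
  set s : ℝ := (g y - g x) / (y - x) with hs
  have hsneg : s < 0 := div_neg_of_neg_of_pos (by linarith) (by linarith)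
  have key : ∀ z < x, g x - s * (x - z) ≤ g z := by
    intro z hz
    have h1 : (g x - g z) / (x - z) ≤ s :=
      hg.slope_mono_adjacent (mem_univ z) (mem_univ y) hz hxy
    have hxz : 0 < x - z := by linarith
    have := (div_le_iff₀ hxz).mp h1
    linarith
  set t : ℝ := (|B - g x| + 1) / (-s) with ht
  have htpos : 0 < t := div_pos (by positivity) (by linarith)
  set z : ℝ := min x x₀ - t with hz
  have hzx : z < x := by
    have : min x x₀ ≤ x := min_le_left _ _
    simp only [hz]; linarith
  have hzx0 : z ≤ x₀ := by
    have : min x x₀ ≤ x₀ := min_le_right _ _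
    simp only [hz]; linarith
  have h1 : t ≤ x - z := by
    have : min x x₀ ≤ x := min_le_left _ _
    simp only [hz]; linarith
  have h2 : -s * t ≤ -s * (x - z) := mul_le_mul_of_nonneg_left h1 (by linarith)
  have h3 : -s * t = |B - g x| + 1 := by
    rw [ht, mul_comm]; exact div_mul_cancel₀ _ (by linarith)
  have h4 : B - g x ≤ |B - g x| := le_abs_self _
  have h5 := key z hzx
  have h6 := hB z hzx0
  nlinarith

/-- a convex function on ℝ bounded above on `Ici x₀` is antitone -/
lemma ConvexOn.antitone_of_bddAbove_Ici {g : ℝ → ℝ} (hg : ConvexOn ℝ univ g) {x₀ B : ℝ}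
    (hB : ∀ x, x₀ ≤ x → g x ≤ B) : Antitone g := by
  intro x y hxy
  rcases eq_or_lt_of_le hxy with rfl | hxy
  · exact le_rfl
  by_contra hlt
  push_neg at hlt
  set s : ℝ := (g y - g x) / (y - x) with hs
  have hspos : 0 < s := div_pos (by linarith) (by linarith)
  have key : ∀ z, y < z → g y + s * (z - y) ≤ g z := by
    intro z hz
    have h1 : s ≤ (g z - g y) / (z - y) :=
      hg.slope_mono_adjacent (mem_univ x) (mem_univ z) hxy hz
    have hzy : 0 < z - y := by linarith
    have := (le_div_iff₀ hzy).mp h1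
    linarith
  set t : ℝ := (|B - g y| + 1) / s with ht
  have htpos : 0 < t := div_pos (by positivity) hspos
  set z : ℝ := max y x₀ + t with hz
  have hyz : y < z := by
    have : y ≤ max y x₀ := le_max_left _ _
    simp only [hz]; linarith
  have hzx0 : x₀ ≤ z := by
    have : x₀ ≤ max y x₀ := le_max_right _ _
    simp only [hz]; linarith
  have h1 : t ≤ z - y := by
    have : y ≤ max y x₀ := le_max_left _ _
    simp only [hz]; linarith
  have h2 : s * t ≤ s * (z - y) := mul_le_mul_of_nonneg_left h1 (by linarith)
  have h3 : s * t = |B - g y| + 1 := by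
    rw [ht, mul_comm]; exact div_mul_cancel₀ _ (by linarith)
  have h4 : B - g y ≤ |B - g y| := le_abs_self _
  have h5 := key z hyz
  have h6 := hB z hzx0
  nlinarith

section asymp

def fD (μ ν : Measure ℝ) : ℝ → ℝ := fun t => Pput ν t - Pput μ t
def fC (μ ν : Measure ℝ) : ℝ → ℝ := convHullFn (fD μ ν)
def mm (μ ν : Measure ℝ) : ℝ := mass ν - mass μ
def AC (μ ν : Measure ℝ) : ℝ := mean ν - mean μ + cconst μ ν
def hh (μ ν : Measure ℝ) : ℝ → ℝ := fun k => fC μ ν k + pconst μ ν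

variable {μ ν : Measure ℝ} (hμ : MemM μ) (hν : MemM ν) (hmass : mass μ ≤ mass ν)
include hμ hν hmass

lemma const_minorant : ∀ y, -(pconst μ ν) ≤ fD μ ν y := by
  intro y
  have := le_pconst hμ hν hmass y
  simp only [fD]; linarith

lemma hmin_exists : ∃ g₀ : ℝ → ℝ, ConvexOn ℝ univ g₀ ∧ ∀ y, g₀ y ≤ fD μ ν y :=
  ⟨fun _ => -(pconst μ ν), convexOn_const _ convex_univ, const_minorant hμ hν hmass⟩

lemma affine_le_fD : ∀ y, mm μ ν * y - AC μ ν ≤ fD μ ν y := by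
  intro y
  have e1 := parity hμ y
  have e2 := parity hν y
  have h1 := le_cconst hμ hν hmass y
  simp only [fD, mm, AC]
  linarith

lemma affine_le_fC (y : ℝ) : mm μ ν * y - AC μ ν ≤ fC μ ν y := by
  have := le_convHullFn (f := fD μ ν) (hmin_exists hμ hν hmass)
    (g := fun y => mm μ ν * y + -(AC μ ν)) (convexOn_affine _ _)
    (fun y => by have := affine_le_fD hμ hν hmass y; linarith) y
  simpa [fC] using this

lemma neg_p_le_fC (y : ℝ) : -(pconst μ ν) ≤ fC μ ν y :=
  le_convHullFn (hmin_exists hμ hν hmass) (convexOn_const _ convex_univ)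
    (const_minorant hμ hν hmass) y

lemma fC_le_fD (y : ℝ) : fC μ ν y ≤ fD μ ν y := convHullFn_le_self (hmin_exists hμ hν hmass) y

lemma fC_convex : ConvexOn ℝ univ (fC μ ν) := convexOn_convHullFn (hmin_exists hμ hν hmass)

lemma fC_mono : Monotone (fC μ ν) := by
  refine (fC_convex hμ hν hmass).monotone_of_bddAbove_Iic (x₀ := 0) (B := ∫ x, |x| ∂ν) ?_
  intro x hx
  have h1 := fC_le_fD hμ hν hmass x
  have h2 := put_le_intabs hν hx
  have h3 := put_nonneg hμ x
  simp only [fD] at h1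
  linarith

lemma gdiff_convex : ConvexOn ℝ univ (fun k => fC μ ν k - mm μ ν * k) := by
  have h1 := (fC_convex hμ hν hmass).add (convexOn_affine (-(mm μ ν)) 0)
  convert h1 using 2 with k
  show _ = fC μ ν k + (-(mm μ ν) * k + 0)
  ring
  rfl

lemma gdiff_anti : Antitone (fun k => fC μ ν k - mm μ ν * k) := by
  refine (gdiff_convex hμ hν hmass).antitone_of_bddAbove_Ici (x₀ := 0)
    (B := Ccall ν 0 + (mean μ - mean ν)) ?_
  intro k hk
  have h1 := fC_le_fD hμ hν hmass k
  have e1 := parity hμ k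
  have e2 := parity hν k
  have h2 : Ccall ν k ≤ Ccall ν 0 := call_anti hν hk
  have h3 := call_nonneg hμ k
  simp only [fD] at h1
  simp only [mm]
  linarith

lemma fC_bddBelow : BddBelow (range (fC μ ν)) := by
  refine ⟨-(pconst μ ν), ?_⟩
  rintro v ⟨k, rfl⟩
  exact neg_p_le_fC hμ hν hmass k

lemma fC_iInf : ⨅ k, fC μ ν k = -(pconst μ ν) := by
  refine le_antisymm ?_ (le_ciInf (neg_p_le_fC hμ hν hmass))
  refine le_of_forall_pos_le_add fun ε hε => ?_
  obtain ⟨k, hk⟩ := pconst_approx hμ hν hmass hε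
  have h1 : fD μ ν k < -(pconst μ ν) + ε := by simp only [fD]; linarith
  exact (ciInf_le (fC_bddBelow hμ hν hmass) k).trans
    ((fC_le_fD hμ hν hmass k).trans h1.le)

lemma fC_tendsto_atBot : Tendsto (fC μ ν) atBot (nhds (-(pconst μ ν))) := by
  have := tendsto_atBot_ciInf (fC_mono hμ hν hmass) (fC_bddBelow hμ hν hmass)
  rwa [fC_iInf hμ hν hmass] at this

lemma gdiff_bddBelow : BddBelow (range (fun k => fC μ ν k - mm μ ν * k)) := by
  refine ⟨-(AC μ ν), ?_⟩
  rintro v ⟨k, rfl⟩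
  have := affine_le_fC hμ hν hmass k
  simp only
  linarith

lemma gdiff_iInf : ⨅ k, (fC μ ν k - mm μ ν * k) = -(AC μ ν) := by
  refine le_antisymm ?_ (le_ciInf fun k => by have := affine_le_fC hμ hν hmass k; linarith)
  refine le_of_forall_pos_le_add fun ε hε => ?_
  obtain ⟨k, hk⟩ := cconst_approx hμ hν hmass hε
  have e1 := parity hμ k
  have e2 := parity hν k
  -- mm * k - fD k = Cμ k - Cν k + mean ν - mean μ
  have h1 : AC μ ν - ε < mm μ ν * k - fD μ ν k := by
    simp only [fD, mm, AC]; linarith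
  have h2 := fC_le_fD hμ hν hmass k
  have h3 := ciInf_le (gdiff_bddBelow hμ hν hmass) k
  linarith

lemma gdiff_tendsto_atTop :
    Tendsto (fun k => fC μ ν k - mm μ ν * k) atTop (nhds (-(AC μ ν))) := by
  have := tendsto_atTop_ciInf (gdiff_anti hμ hν hmass) (gdiff_bddBelow hμ hν hmass)
  rwa [gdiff_iInf hμ hν hmass] at this

lemma hh_nonneg (k : ℝ) : 0 ≤ hh μ ν k := by
  have := neg_p_le_fC hμ hν hmass k
  simp only [hh]; linarith

lemma hh_mono : Monotone (hh μ ν) := fun a b hab => by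
  have := fC_mono hμ hν hmass hab
  simp only [hh]; linarith

lemma hh_convex : ConvexOn ℝ univ (hh μ ν) := by
  have h1 := (fC_convex hμ hν hmass).add (convexOn_const (pconst μ ν) convex_univ)
  exact h1

lemma hh_continuous : Continuous (hh μ ν) := by
  have := (hh_convex hμ hν hmass).continuousOn isOpen_univ
  rw [← continuousOn_univ]; exact this

lemma hh_tendsto_atBot : Tendsto (hh μ ν) atBot (nhds 0) := by
  have h := (fC_tendsto_atBot hμ hν hmass).add_const (pconst μ ν)
  show Tendsto (fun x => fC μ ν x + pconst μ ν) atBot (nhds 0)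
  simpa using h

lemma hh_diff_tendsto_atTop :
    Tendsto (fun k => hh μ ν k - (mm μ ν * k - (AC μ ν - pconst μ ν))) atTop (nhds 0) := by
  have h := (gdiff_tendsto_atTop hμ hν hmass).add_const (AC μ ν)
  simp only [neg_add_cancel] at h
  refine h.congr fun k => ?_
  simp only [hh]; ring

end asymp
section deriv

def FF (h : ℝ → ℝ) (t : ℝ) : ℝ := sInf (slope h t '' Ioi t)

variable {h : ℝ → ℝ} (hcx : ConvexOn ℝ univ h)
include hcx

lemma slope_monoOn (t : ℝ) : MonotoneOn (slope h t) (Ioi t) := by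
  intro x hx y hy hxy
  have := hcx.secant_mono (mem_univ t) (mem_univ x) (mem_univ y)
    (ne_of_gt hx) (ne_of_gt hy) hxy
  simpa [slope_def_field, div_eq_iff] using this

lemma slope_lb {t : ℝ} : ∀ v ∈ slope h t '' Ioi t, slope h (t-1) t ≤ v := by
  rintro v ⟨s, hs, rfl⟩
  have h1 := hcx.slope_mono_adjacent (mem_univ (t-1)) (mem_univ s)
    (show t - 1 < t by linarith) hs
  simp only [slope_def_field]
  convert h1 using 2 <;> ring_nf

lemma slope_img_bddBelow (t : ℝ) : BddBelow (slope h t '' Ioi t) :=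
  ⟨slope h (t-1) t, slope_lb hcx⟩

lemma slope_img_nonempty (t : ℝ) : (slope h t '' Ioi t).Nonempty :=
  ⟨slope h t (t+1), t+1, by simp, rfl⟩

lemma FF_le_slope {t s : ℝ} (hs : t < s) : FF h t ≤ slope h t s :=
  csInf_le (slope_img_bddBelow hcx t) ⟨s, hs, rfl⟩

lemma le_FF {t c : ℝ} (hc : ∀ s, t < s → c ≤ slope h t s) : c ≤ FF h t :=
  le_csInf (slope_img_nonempty hcx t) (by rintro v ⟨s, hs, rfl⟩; exact hc s hs)

lemma hasDerivWithinAt_FF (t : ℝ) : HasDerivWithinAt h (FF h t) (Ioi t) t := by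
  rw [hasDerivWithinAt_iff_tendsto_slope' (notMem_Ioi.mpr le_rfl)]
  exact MonotoneOn.tendsto_nhdsGT (slope_monoOn hcx t) (slope_img_bddBelow hcx t)

lemma FF_mono : Monotone (FF h) := by
  intro a b hab
  rcases eq_or_lt_of_le hab with rfl | hab
  · exact le_rfl
  refine (FF_le_slope hcx hab).trans (le_FF hcx fun s hs => ?_)
  have := hcx.slope_mono_adjacent (mem_univ a) (mem_univ s) hab hs
  simpa [slope_def_field] using this

lemma FF_le_diff (t : ℝ) : FF h t ≤ h (t+1) - h t := by
  have := FF_le_slope hcx (show t < t + 1 by linarith)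
  simpa [slope_def_field] using this

lemma diff_le_FF (t : ℝ) : h t - h (t-1) ≤ FF h t := by
  refine le_FF hcx fun s hs => ?_
  have h1 := hcx.slope_mono_adjacent (mem_univ (t-1)) (mem_univ s)
    (show t - 1 < t by linarith) hs
  simp only [slope_def_field]
  have e : t - (t-1) = 1 := by ring
  rw [e, div_one] at h1
  exact h1

lemma FF_nonneg (hmono : Monotone h) (t : ℝ) : 0 ≤ FF h t := by
  refine le_FF hcx fun s hs => ?_
  rw [slope_def_field]
  have h1 := hmono (le_of_lt hs)
  have hst : 0 < s - t := by linarith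
  exact div_nonneg (by linarith) hst.le

/-- FTC for the right derivative of a convex function -/
lemma FF_integral {a b : ℝ} (hab : a ≤ b) (hcont : Continuous h) :
    ∫ t in a..b, FF h t = h b - h a := by
  refine intervalIntegral.integral_eq_sub_of_hasDeriv_right_of_le hab
    (hcont.continuousOn) (fun t _ => hasDerivWithinAt_FF hcx t) ?_
  exact (FF_mono hcx).intervalIntegrable

end deriv
section stieltjes

open Classical in
def SFmv (μ ν : Measure ℝ) : StieltjesFunction ℝ :=
  if hmono : Monotone (FF (hh μ ν)) then hmono.stieltjesFunction else StieltjesFunction.id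

def thetaM (μ ν : Measure ℝ) : Measure ℝ := (SFmv μ ν).measure

variable {μ ν : Measure ℝ} (hμ : MemM μ) (hν : MemM ν) (hmass : mass μ ≤ mass ν)
include hμ hν hmass

lemma Fmv_mono : Monotone (FF (hh μ ν)) := FF_mono (hh_convex hμ hν hmass)

lemma SFmv_eq (x : ℝ) : SFmv μ ν x = Function.rightLim (FF (hh μ ν)) x := by
  rw [SFmv, dif_pos (Fmv_mono hμ hν hmass)]
  rfl

lemma Fmv_tendsto_atBot : Tendsto (FF (hh μ ν)) atBot (nhds 0) := by
  have hcx := hh_convex hμ hν hmass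
  have hb := hh_tendsto_atBot hμ hν hmass
  have hup : Tendsto (fun t => hh μ ν (t+1) - hh μ ν t) atBot (nhds 0) := by
    have h1 : Tendsto (fun t : ℝ => t + 1) atBot atBot := tendsto_atBot_add_const_right _ _ tendsto_id
    have := (hb.comp h1).sub hb
    simpa using this
  refine tendsto_of_tendsto_of_tendsto_of_le_of_le tendsto_const_nhds hup ?_ ?_
  · exact fun t => FF_nonneg hcx (hh_mono hμ hν hmass) t
  · exact fun t => FF_le_diff hcx t

lemma Fmv_tendsto_atTop : Tendsto (FF (hh μ ν)) atTop (nhds (mm μ ν)) := by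
  have hcx := hh_convex hμ hν hmass
  have hq := hh_diff_tendsto_atTop hμ hν hmass
  have hup : Tendsto (fun t => hh μ ν (t+1) - hh μ ν t) atTop (nhds (mm μ ν)) := by
    have h1 : Tendsto (fun t : ℝ => t + 1) atTop atTop := tendsto_atTop_add_const_right _ _ tendsto_id
    have := (hq.comp h1).sub hq
    simp only [Function.comp] at this
    have h2 : ∀ t : ℝ, (hh μ ν (t+1) - (mm μ ν * (t+1) - (AC μ ν - pconst μ ν)))
        - (hh μ ν t - (mm μ ν * t - (AC μ ν - pconst μ ν)))
        = hh μ ν (t+1) - hh μ ν t - mm μ ν := by intro t; ring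
    have h3 := this.congr (fun t => h2 t)
    simp only [sub_zero] at h3
    have := h3.add_const (mm μ ν)
    simpa using this
  have hlo : Tendsto (fun t => hh μ ν t - hh μ ν (t-1)) atTop (nhds (mm μ ν)) := by
    have h1 : Tendsto (fun t : ℝ => t - 1) atTop atTop := tendsto_atTop_add_const_right _ _ tendsto_id
    have := hq.sub (hq.comp h1)
    simp only [Function.comp] at this
    have h2 : ∀ t : ℝ, (hh μ ν t - (mm μ ν * t - (AC μ ν - pconst μ ν)))
        - (hh μ ν (t-1) - (mm μ ν * (t-1) - (AC μ ν - pconst μ ν)))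
        = hh μ ν t - hh μ ν (t-1) - mm μ ν := by intro t; ring
    have h3 := this.congr (fun t => h2 t)
    simp only [sub_zero] at h3
    have := h3.add_const (mm μ ν)
    simpa using this
  refine tendsto_of_tendsto_of_tendsto_of_le_of_le hlo hup ?_ ?_
  · exact fun t => diff_le_FF hcx t
  · exact fun t => FF_le_diff hcx t

lemma Fmv_le_mm (t : ℝ) : FF (hh μ ν) t ≤ mm μ ν := by
  refine ge_of_tendsto (Fmv_tendsto_atTop hμ hν hmass) ?_
  filter_upwards [eventually_ge_atTop t] with s hs
  exact Fmv_mono hμ hν hmass hs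

lemma SFmv_tendsto_atBot : Tendsto (SFmv μ ν) atBot (nhds 0) := by
  have hF := Fmv_tendsto_atBot hμ hν hmass
  have h1 : Tendsto (fun t : ℝ => t + 1) atBot atBot := tendsto_atBot_add_const_right _ _ tendsto_id
  refine tendsto_of_tendsto_of_tendsto_of_le_of_le hF (hF.comp h1) ?_ ?_
  · intro t
    rw [SFmv_eq hμ hν hmass]
    exact (Fmv_mono hμ hν hmass).le_rightLim le_rfl
  · intro t
    rw [SFmv_eq hμ hν hmass]
    exact (Fmv_mono hμ hν hmass).rightLim_le (lt_add_one t)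

lemma SFmv_tendsto_atTop : Tendsto (SFmv μ ν) atTop (nhds (mm μ ν)) := by
  have hF := Fmv_tendsto_atTop hμ hν hmass
  have h1 : Tendsto (fun t : ℝ => t + 1) atTop atTop := tendsto_atTop_add_const_right _ _ tendsto_id
  refine tendsto_of_tendsto_of_tendsto_of_le_of_le hF (hF.comp h1) ?_ ?_
  · intro t
    rw [SFmv_eq hμ hν hmass]
    exact (Fmv_mono hμ hν hmass).le_rightLim le_rfl
  · intro t
    rw [SFmv_eq hμ hν hmass]
    exact (Fmv_mono hμ hν hmass).rightLim_le (lt_add_one t)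

lemma SFmv_nonneg (t : ℝ) : 0 ≤ SFmv μ ν t := by
  rw [SFmv_eq hμ hν hmass]
  exact le_trans (FF_nonneg (hh_convex hμ hν hmass) (hh_mono hμ hν hmass) t)
    ((Fmv_mono hμ hν hmass).le_rightLim le_rfl)

lemma SFmv_le_mm (t : ℝ) : SFmv μ ν t ≤ mm μ ν := by
  rw [SFmv_eq hμ hν hmass]
  exact le_trans ((Fmv_mono hμ hν hmass).rightLim_le (lt_add_one t))
    (Fmv_le_mm hμ hν hmass (t+1))

lemma thetaM_Iic (x : ℝ) : thetaM μ ν (Iic x) = ENNReal.ofReal (SFmv μ ν x) := by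
  rw [thetaM, StieltjesFunction.measure_Iic _ (SFmv_tendsto_atBot hμ hν hmass), sub_zero]

lemma thetaM_univ : thetaM μ ν univ = ENNReal.ofReal (mm μ ν) := by
  rw [thetaM, StieltjesFunction.measure_univ _ (SFmv_tendsto_atBot hμ hν hmass)
    (SFmv_tendsto_atTop hμ hν hmass), sub_zero]

lemma thetaM_finite : IsFiniteMeasure (thetaM μ ν) := by
  constructor
  rw [thetaM_univ hμ hν hmass]
  exact ENNReal.ofReal_lt_top

lemma thetaM_Ioi (s : ℝ) :
    thetaM μ ν (Ioi s) = ENNReal.ofReal (mm μ ν - SFmv μ ν s) := by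
  have : IsFiniteMeasure (thetaM μ ν) := thetaM_finite hμ hν hmass
  have h1 : Ioi s = (Iic s)ᶜ := by simp
  rw [h1, measure_compl measurableSet_Iic (measure_ne_top _ _),
    thetaM_univ hμ hν hmass, thetaM_Iic hμ hν hmass,
    ← ENNReal.ofReal_sub _ (SFmv_nonneg hμ hν hmass s)]

end stieltjes
section lint

/-- the inner function for Fubini -/
lemma indicator_swap (x s : ℝ) :
    (Ici x).indicator (fun _ => (1:ℝ≥0∞)) s = (Iic s).indicator (fun _ => (1:ℝ≥0∞)) x := by
  simp only [Set.indicator_apply, mem_Ici, mem_Iic]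

lemma meas_prod_indicator :
    Measurable (fun z : ℝ × ℝ => (Ici z.1).indicator (fun _ => (1:ℝ≥0∞)) z.2) := by
  have : (fun z : ℝ × ℝ => (Ici z.1).indicator (fun _ => (1:ℝ≥0∞)) z.2)
      = {p : ℝ × ℝ | p.1 ≤ p.2}.indicator (fun _ => (1:ℝ≥0∞)) := by
    funext z
    simp only [Set.indicator_apply, mem_Ici, mem_setOf_eq]
  rw [this]
  exact measurable_const.indicator (measurableSet_le measurable_fst measurable_snd)

variable {μ ν : Measure ℝ} (hμ : MemM μ) (hν : MemM ν) (hmass : mass μ ≤ mass ν)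
include hμ hν hmass

lemma SFmv_ae_eq_Fmv :
    (fun s => ENNReal.ofReal (SFmv μ ν s)) =ᵐ[volume] (fun s => ENNReal.ofReal (FF (hh μ ν) s)) := by
  have hmono := Fmv_mono hμ hν hmass
  have hcount : {s : ℝ | ¬ ContinuousAt (FF (hh μ ν)) s}.Countable :=
    hmono.countable_not_continuousAt
  have hnull : volume {s : ℝ | ¬ ContinuousAt (FF (hh μ ν)) s} = 0 :=
    hcount.measure_zero _
  rw [Filter.EventuallyEq, ae_iff]
  refine measure_mono_null ?_ hnull
  intro s hs
  simp only [mem_setOf_eq] at hs ⊢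
  intro hcont
  apply hs
  rw [SFmv_eq hμ hν hmass, hmono.continuousWithinAt_Ioi_iff_rightLim_eq.mp hcont.continuousWithinAt]

lemma lint_eq_setLint (k : ℝ) :
    ∫⁻ x, ENNReal.ofReal (max (k - x) 0) ∂(thetaM μ ν)
      = ∫⁻ s in Iio k, ENNReal.ofReal (SFmv μ ν s) ∂volume := by
  have : IsFiniteMeasure (thetaM μ ν) := thetaM_finite hμ hν hmass
  have h1 : ∀ x : ℝ, ENNReal.ofReal (max (k - x) 0)
      = ∫⁻ s in Iio k, (Ici x).indicator (fun _ => (1:ℝ≥0∞)) s ∂volume := by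
    intro x
    rw [lintegral_indicator measurableSet_Ici, Measure.restrict_restrict measurableSet_Ici]
    have h2 : Ici x ∩ Iio k = Ico x k := Ici_inter_Iio
    rw [h2]
    simp only [lintegral_one, Measure.restrict_apply_univ, Real.volume_Ico]
    rcases le_total (k - x) 0 with h | h
    · rw [max_eq_right h]
      simp [ENNReal.ofReal_eq_zero.mpr h]
    · rw [max_eq_left h]
  simp_rw [h1]
  rw [lintegral_lintegral_swap]
  · refine lintegral_congr fun s => ?_
    simp_rw [indicator_swap]
    rw [lintegral_indicator measurableSet_Iic]
    simp only [lintegral_one, Measure.restrict_apply_univ]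
    rw [thetaM_Iic hμ hν hmass]
  · exact meas_prod_indicator.aemeasurable

lemma setLint_Fmv (k : ℝ) :
    ∫⁻ s in Iio k, ENNReal.ofReal (FF (hh μ ν) s) ∂volume = ENNReal.ofReal (hh μ ν k) := by
  have hcx := hh_convex hμ hν hmass
  have hmono := Fmv_mono hμ hν hmass
  set F := FF (hh μ ν) with hF
  set g : ℕ → ℝ → ℝ≥0∞ := fun n => (Ioo (k - (n:ℝ)) k).indicator (fun s => ENNReal.ofReal (F s))
    with hg
  have hmeas : ∀ n, Measurable (g n) :=
    fun n => (ENNReal.measurable_ofReal.comp hmono.measurable).indicator measurableSet_Ioo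
  have hgmono : Monotone g := by
    intro a b hab s
    refine Set.indicator_le_indicator_of_subset (Ioo_subset_Ioo_left ?_) (fun _ => zero_le) s
    have : (a:ℝ) ≤ b := Nat.cast_le.mpr hab
    linarith
  have hsup : ∀ s, (⨆ n, g n s) = (Iio k).indicator (fun s => ENNReal.ofReal (F s)) s := by
    intro s
    have hgval : ∀ n : ℕ, g n s = if k - (n:ℝ) < s ∧ s < k then ENNReal.ofReal (F s) else 0 := by
      intro n
      simp [hg, Set.indicator_apply, mem_Ioo]
    have hival : (Iio k).indicator (fun s => ENNReal.ofReal (F s)) s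
        = if s < k then ENNReal.ofReal (F s) else 0 := by
      simp [Set.indicator_apply, mem_Iio]
    rw [hival]
    rcases lt_or_ge s k with hs | hs
    · rw [if_pos hs]
      refine le_antisymm (iSup_le fun n => ?_) ?_
      · rw [hgval n]
        split
        · exact le_rfl
        · exact zero_le
      · obtain ⟨n, hn⟩ := exists_nat_gt (k - s)
        refine le_iSup_of_le n ?_
        rw [hgval n, if_pos ⟨by linarith, hs⟩]
    · rw [if_neg (not_lt.mpr hs)]
      refine le_antisymm (iSup_le fun n => ?_) (zero_le)
      rw [hgval n, if_neg (by intro hc; linarith [hc.2])]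
  have hiSup := lintegral_iSup (μ := volume) hmeas hgmono
  have hL : ∫⁻ s in Iio k, ENNReal.ofReal (F s) ∂volume = ∫⁻ s, ⨆ n, g n s ∂volume := by
    rw [← lintegral_indicator measurableSet_Iio]
    exact lintegral_congr fun s => (hsup s).symm
  rw [hL, hiSup]
  have hgn : ∀ n : ℕ, ∫⁻ s, g n s ∂volume = ENNReal.ofReal (hh μ ν k - hh μ ν (k - n)) := by
    intro n
    rw [hg]
    simp only
    rw [lintegral_indicator measurableSet_Ioo]
    have hle : k - (n:ℝ) ≤ k := by
      have : (0:ℝ) ≤ n := Nat.cast_nonneg n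
      linarith
    have hInt : IntegrableOn F (Ioo (k - (n:ℝ)) k) volume :=
      ((intervalIntegrable_iff_integrableOn_Ioc_of_le hle).mp hmono.intervalIntegrable).mono_set
        Ioo_subset_Ioc_self
    rw [← ofReal_integral_eq_lintegral_ofReal hInt
      (ae_of_all _ fun s => FF_nonneg hcx (hh_mono hμ hν hmass) s)]
    congr 1
    rw [← MeasureTheory.integral_Ioc_eq_integral_Ioo, ← intervalIntegral.integral_of_le hle]
    exact FF_integral hcx hle (hh_continuous hμ hν hmass)
  simp_rw [hgn]
  have h1 : Tendsto (fun n : ℕ => k - (n:ℝ)) atTop atBot := by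
    have h0 : Tendsto (fun n : ℕ => -(n:ℝ)) atTop atBot :=
      tendsto_neg_atTop_atBot.comp tendsto_natCast_atTop_atTop
    have := tendsto_atBot_add_const_left atTop k h0
    refine this.congr fun n => ?_
    ring
  have htend : Tendsto (fun n : ℕ => ENNReal.ofReal (hh μ ν k - hh μ ν (k - n))) atTop
      (nhds (ENNReal.ofReal (hh μ ν k))) := by
    refine ENNReal.tendsto_ofReal ?_
    have h2 := ((hh_tendsto_atBot hμ hν hmass).comp h1).const_sub (hh μ ν k)
    simpa using h2
  have hm : Monotone (fun n : ℕ => ENNReal.ofReal (hh μ ν k - hh μ ν (k - n))) := by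
    intro a b hab
    refine ENNReal.ofReal_le_ofReal ?_
    have : (a:ℝ) ≤ b := Nat.cast_le.mpr hab
    have := hh_mono hμ hν hmass (show k - (b:ℝ) ≤ k - a by linarith)
    linarith
  exact tendsto_nhds_unique (tendsto_atTop_iSup hm) htend

end lint
section lint2

lemma indicator_swap' (x s : ℝ) :
    (Iio x).indicator (fun _ => (1:ℝ≥0∞)) s = (Ioi s).indicator (fun _ => (1:ℝ≥0∞)) x := by
  simp only [Set.indicator_apply, mem_Iio, mem_Ioi]

lemma meas_prod_indicator' :
    Measurable (fun z : ℝ × ℝ => (Iio z.1).indicator (fun _ => (1:ℝ≥0∞)) z.2) := by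
  have : (fun z : ℝ × ℝ => (Iio z.1).indicator (fun _ => (1:ℝ≥0∞)) z.2)
      = {p : ℝ × ℝ | p.2 < p.1}.indicator (fun _ => (1:ℝ≥0∞)) := by
    funext z
    simp only [Set.indicator_apply, mem_Iio, mem_setOf_eq]
  rw [this]
  exact measurable_const.indicator (measurableSet_lt measurable_snd measurable_fst)

variable {μ ν : Measure ℝ} (hμ : MemM μ) (hν : MemM ν) (hmass : mass μ ≤ mass ν)
include hμ hν hmass

lemma SFmv_ae_real : (fun s => SFmv μ ν s) =ᵐ[volume] (fun s => FF (hh μ ν) s) := by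
  have hmono := Fmv_mono hμ hν hmass
  have hcount : {s : ℝ | ¬ ContinuousAt (FF (hh μ ν)) s}.Countable :=
    hmono.countable_not_continuousAt
  have hnull : volume {s : ℝ | ¬ ContinuousAt (FF (hh μ ν)) s} = 0 := hcount.measure_zero _
  rw [Filter.EventuallyEq, ae_iff]
  refine measure_mono_null ?_ hnull
  intro s hs
  simp only [mem_setOf_eq] at hs ⊢
  intro hcont
  apply hs
  rw [SFmv_eq hμ hν hmass, hmono.continuousWithinAt_Ioi_iff_rightLim_eq.mp hcont.continuousWithinAt]

lemma lint_put (k : ℝ) :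
    ∫⁻ x, ENNReal.ofReal (max (k - x) 0) ∂(thetaM μ ν) = ENNReal.ofReal (hh μ ν k) := by
  rw [lint_eq_setLint hμ hν hmass k, ← setLint_Fmv hμ hν hmass k]
  refine lintegral_congr_ae (ae_restrict_of_ae ?_)
  filter_upwards [SFmv_ae_real hμ hν hmass] with s hs
  rw [hs]

lemma lint_call0 :
    ∫⁻ x, ENNReal.ofReal (max x 0) ∂(thetaM μ ν)
      = ENNReal.ofReal (AC μ ν - pconst μ ν + hh μ ν 0) := by
  have : IsFiniteMeasure (thetaM μ ν) := thetaM_finite hμ hν hmass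
  have hcx := hh_convex hμ hν hmass
  set F := FF (hh μ ν) with hF
  have hmono : Monotone F := Fmv_mono hμ hν hmass
  have h1 : ∀ x : ℝ, ENNReal.ofReal (max x 0)
      = ∫⁻ s in Ioi (0:ℝ), (Iio x).indicator (fun _ => (1:ℝ≥0∞)) s ∂volume := by
    intro x
    rw [lintegral_indicator measurableSet_Iio, Measure.restrict_restrict measurableSet_Iio]
    have h2 : Iio x ∩ Ioi 0 = Ioo 0 x := by
      ext s; simp [mem_Ioo, mem_Iio, mem_Ioi, and_comm]
    rw [h2]
    simp only [lintegral_one, Measure.restrict_apply_univ, Real.volume_Ioo]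
    rcases le_total x 0 with h | h
    · rw [max_eq_right h]
      simp [ENNReal.ofReal_eq_zero.mpr (by linarith : x - 0 ≤ 0)]
      linarith
    · rw [max_eq_left h, sub_zero]
  simp_rw [h1]
  rw [lintegral_lintegral_swap]
  swap
  · exact meas_prod_indicator'.aemeasurable
  have h3 : ∀ᵐ s ∂(volume.restrict (Ioi (0:ℝ))),
      (∫⁻ x, (Iio x).indicator (fun _ => (1:ℝ≥0∞)) s ∂(thetaM μ ν))
        = ENNReal.ofReal (mm μ ν - F s) := by
    refine ae_restrict_of_ae ?_
    filter_upwards [SFmv_ae_real hμ hν hmass] with s hs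
    have : ∀ x : ℝ, (Iio x).indicator (fun _ => (1:ℝ≥0∞)) s
        = (Ioi s).indicator (fun _ => (1:ℝ≥0∞)) x := fun x => indicator_swap' x s
    simp_rw [this]
    rw [lintegral_indicator measurableSet_Ioi]
    simp only [lintegral_one, Measure.restrict_apply_univ]
    rw [thetaM_Ioi hμ hν hmass, hs]
  rw [lintegral_congr_ae h3]
  -- now  ∫⁻ s in Ioi 0, ofReal (mm - F s) = ofReal (AC - p + hh 0)
  set g : ℕ → ℝ → ℝ≥0∞ := fun n => (Ioo (0:ℝ) (n:ℝ)).indicator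
    (fun s => ENNReal.ofReal (mm μ ν - F s)) with hg
  have hmeasg : ∀ n, Measurable (g n) := by
    intro n
    exact (ENNReal.measurable_ofReal.comp ((measurable_const.sub hmono.measurable))).indicator
      measurableSet_Ioo
  have hgmono : Monotone g := by
    intro a b hab s
    refine Set.indicator_le_indicator_of_subset (Ioo_subset_Ioo_right ?_) (fun _ => zero_le) s
    exact_mod_cast hab
  have hsup : ∀ s, (⨆ n, g n s) = (Ioi (0:ℝ)).indicator (fun s => ENNReal.ofReal (mm μ ν - F s)) s := by
    intro s
    have hgval : ∀ n : ℕ, g n s = if 0 < s ∧ s < (n:ℝ) then ENNReal.ofReal (mm μ ν - F s) else 0 := by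
      intro n
      simp [hg, Set.indicator_apply, mem_Ioo]
    have hival : (Ioi (0:ℝ)).indicator (fun s => ENNReal.ofReal (mm μ ν - F s)) s
        = if 0 < s then ENNReal.ofReal (mm μ ν - F s) else 0 := by
      simp [Set.indicator_apply, mem_Ioi]
    rw [hival]
    rcases lt_or_ge 0 s with hs | hs
    · rw [if_pos hs]
      refine le_antisymm (iSup_le fun n => ?_) ?_
      · rw [hgval n]
        split
        · exact le_rfl
        · exact zero_le
      · obtain ⟨n, hn⟩ := exists_nat_gt s
        exact le_iSup_of_le n (by rw [hgval n, if_pos ⟨hs, hn⟩])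
    · rw [if_neg (not_lt.mpr hs)]
      refine le_antisymm (iSup_le fun n => ?_) (zero_le)
      rw [hgval n, if_neg (by intro hc; linarith [hc.1])]
  have hL : ∫⁻ s in Ioi (0:ℝ), ENNReal.ofReal (mm μ ν - F s) ∂volume = ∫⁻ s, ⨆ n, g n s ∂volume := by
    rw [← lintegral_indicator measurableSet_Ioi]
    exact lintegral_congr fun s => (hsup s).symm
  rw [hL, lintegral_iSup (μ := volume) hmeasg hgmono]
  have hgn : ∀ n : ℕ, ∫⁻ s, g n s ∂volume
      = ENNReal.ofReal (mm μ ν * n - (hh μ ν n - hh μ ν 0)) := by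
    intro n
    rw [hg]
    simp only
    rw [lintegral_indicator measurableSet_Ioo]
    have h0n : (0:ℝ) ≤ n := Nat.cast_nonneg n
    have hIntF : IntegrableOn F (Ioo (0:ℝ) (n:ℝ)) volume :=
      ((intervalIntegrable_iff_integrableOn_Ioc_of_le h0n).mp hmono.intervalIntegrable).mono_set
        Ioo_subset_Ioc_self
    have hIntc : IntegrableOn (fun _ : ℝ => mm μ ν) (Ioo (0:ℝ) (n:ℝ)) volume :=
      integrableOn_const (by rw [Real.volume_Ioo]; exact ENNReal.ofReal_ne_top)
    have hInt : IntegrableOn (fun s => mm μ ν - F s) (Ioo (0:ℝ) (n:ℝ)) volume := hIntc.sub hIntF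
    rw [← ofReal_integral_eq_lintegral_ofReal hInt
      (ae_of_all _ fun s => sub_nonneg.mpr (Fmv_le_mm hμ hν hmass s))]
    congr 1
    rw [integral_sub hIntc hIntF]
    have e1 : ∫ s in Ioo (0:ℝ) (n:ℝ), F s = hh μ ν n - hh μ ν 0 := by
      rw [← MeasureTheory.integral_Ioc_eq_integral_Ioo, ← intervalIntegral.integral_of_le h0n]
      exact FF_integral hcx h0n (hh_continuous hμ hν hmass)
    have e2 : ∫ _ in Ioo (0:ℝ) (n:ℝ), (mm μ ν) = mm μ ν * n := by
      rw [setIntegral_const, Real.volume_real_Ioo_of_le h0n, sub_zero, smul_eq_mul,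
        mul_comm]
    rw [e1, e2]
  simp_rw [hgn]
  have hq := hh_diff_tendsto_atTop hμ hν hmass
  have h1 : Tendsto (fun n : ℕ => (n:ℝ)) atTop atTop := tendsto_natCast_atTop_atTop
  have htend : Tendsto (fun n : ℕ => ENNReal.ofReal (mm μ ν * n - (hh μ ν n - hh μ ν 0))) atTop
      (nhds (ENNReal.ofReal (AC μ ν - pconst μ ν + hh μ ν 0))) := by
    refine ENNReal.tendsto_ofReal ?_
    have h2 := ((hq.comp h1).const_sub (AC μ ν - pconst μ ν)).add_const (hh μ ν 0)
    simp only [sub_zero] at h2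
    refine h2.congr fun n => ?_
    simp only [Function.comp]
    ring
  have hgrow : ∀ a b : ℝ, a ≤ b → hh μ ν b - hh μ ν a ≤ mm μ ν * (b - a) := by
    intro a b hab
    have hFI : IntervalIntegrable F volume a b := hmono.intervalIntegrable
    have hCI : IntervalIntegrable (fun _ : ℝ => mm μ ν) volume a b := intervalIntegrable_const
    have := intervalIntegral.integral_mono_on hab hFI hCI
      (fun s _ => Fmv_le_mm hμ hν hmass s)
    rw [FF_integral hcx hab (hh_continuous hμ hν hmass),
      intervalIntegral.integral_const, smul_eq_mul] at this
    linarith [this]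
  have hm : Monotone (fun n : ℕ => ENNReal.ofReal (mm μ ν * n - (hh μ ν n - hh μ ν 0))) := by
    intro a b hab
    refine ENNReal.ofReal_le_ofReal ?_
    have hab' : (a:ℝ) ≤ b := Nat.cast_le.mpr hab
    have := hgrow a b hab'
    nlinarith
  exact tendsto_nhds_unique (tendsto_atTop_iSup hm) htend

lemma integrable_id_theta : Integrable (fun x : ℝ => x) (thetaM μ ν) := by
  constructor
  · exact measurable_id.aestronglyMeasurable
  · rw [hasFiniteIntegral_iff_norm]
    have h1 : ∀ x : ℝ, ENNReal.ofReal ‖x‖ = ENNReal.ofReal (max x 0)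
        + ENNReal.ofReal (max (0 - x) 0) := by
      intro x
      rw [← ENNReal.ofReal_add (le_max_right _ _) (le_max_right _ _)]
      congr 1
      rw [Real.norm_eq_abs]
      rcases le_total x 0 with h | h
      · rw [abs_of_nonpos h, max_eq_right h, max_eq_left (by linarith)]; ring
      · rw [abs_of_nonneg h, max_eq_left h, max_eq_right (by linarith)]; ring
    simp_rw [h1]
    rw [lintegral_add_left]
    · have e1 := lint_call0 hμ hν hmass
      have e2 := lint_put hμ hν hmass 0
      rw [e1, e2]
      exact ENNReal.add_lt_top.mpr ⟨ENNReal.ofReal_lt_top, ENNReal.ofReal_lt_top⟩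
    · exact ENNReal.measurable_ofReal.comp (measurable_id.max measurable_const)

lemma thetaM_MemM : MemM (thetaM μ ν) :=
  ⟨thetaM_finite hμ hν hmass, integrable_id_theta hμ hν hmass⟩

lemma Pput_thetaM (k : ℝ) : Pput (thetaM μ ν) k = hh μ ν k := by
  have heq := integral_eq_lintegral_of_nonneg_ae (μ := thetaM μ ν)
    (f := fun x => max (k - x) 0) (ae_of_all _ fun x => le_max_right _ _)
    (((continuous_const.sub continuous_id).max continuous_const).aestronglyMeasurable)
  rw [Pput, heq, lint_put hμ hν hmass k, ENNReal.toReal_ofReal (hh_nonneg hμ hν hmass k)]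

end lint2
section unique

lemma cdf_from_put {θ : Measure ℝ} (hθ : MemM θ) (t : ℝ) :
    Tendsto (fun n : ℕ => ((n:ℝ)+1) * (Pput θ (t + 1/((n:ℝ)+1)) - Pput θ t)) atTop
      (nhds ((θ (Iic t)).toReal)) := by
  have : IsFiniteMeasure θ := hθ.1
  have hval : ∀ n : ℕ, ((n:ℝ)+1) * (Pput θ (t + 1/((n:ℝ)+1)) - Pput θ t)
      = ∫ x, ((n:ℝ)+1) * (max (t + 1/((n:ℝ)+1) - x) 0 - max (t - x) 0) ∂θ := by
    intro n
    rw [Pput, Pput, ← integral_sub (integrable_put hθ _) (integrable_put hθ _), ← integral_const_mul]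
  have hlim : ((θ (Iic t)).toReal) = ∫ x, (Iic t).indicator (fun _ => (1:ℝ)) x ∂θ := by
    rw [integral_indicator measurableSet_Iic]
    simp [Measure.real]
  rw [hlim]
  have hres := tendsto_integral_of_dominated_convergence (μ := θ)
    (F := fun n x => ((n:ℝ)+1) * (max (t + 1/((n:ℝ)+1) - x) 0 - max (t - x) 0))
    (f := (Iic t).indicator (fun _ => (1:ℝ))) (bound := fun _ => 1)
    (fun n => (continuous_const.mul (((continuous_const.sub continuous_id).max
      continuous_const).sub ((continuous_const.sub continuous_id).max
      continuous_const))).aestronglyMeasurable)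
    (integrable_const 1) ?_ ?_
  · exact Tendsto.congr (fun n => (hval n).symm) hres
  · intro n
    refine ae_of_all _ fun x => ?_
    have hε : 0 < 1/((n:ℝ)+1) := by positivity
    set ε := 1/((n:ℝ)+1) with hεdef
    have hd1 : 0 ≤ max (t + ε - x) 0 - max (t - x) 0 := by
      apply sub_nonneg.mpr
      exact max_le_max (by linarith) le_rfl
    have hd2 : max (t + ε - x) 0 - max (t - x) 0 ≤ ε := by
      rcases le_total (t - x) 0 with h | h
      · rw [max_eq_right h]
        rcases le_total (t + ε - x) 0 with h' | h'
        · rw [max_eq_right h']; linarith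
        · rw [max_eq_left h']; linarith
      · rw [max_eq_left h, max_eq_left (by linarith)]; linarith
    have hn1 : (0:ℝ) < (n:ℝ)+1 := by positivity
    rw [Real.norm_eq_abs, abs_of_nonneg (mul_nonneg hn1.le hd1)]
    calc ((n:ℝ)+1) * (max (t + ε - x) 0 - max (t - x) 0) ≤ ((n:ℝ)+1) * ε :=
          mul_le_mul_of_nonneg_left hd2 hn1.le
      _ = 1 := by rw [hεdef]; field_simp
  · refine ae_of_all _ fun x => ?_
    rcases le_or_gt x t with hx | hx
    · have : ∀ n : ℕ, ((n:ℝ)+1) * (max (t + 1/((n:ℝ)+1) - x) 0 - max (t - x) 0) = 1 := by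
        intro n
        have hε : 0 < 1/((n:ℝ)+1) := by positivity
        rw [max_eq_left (by linarith), max_eq_left (by linarith)]
        field_simp
        ring
      rw [Set.indicator_of_mem (mem_Iic.mpr hx)]
      exact Tendsto.congr (fun n => (this n).symm) tendsto_const_nhds
    · have hev : ∀ᶠ n : ℕ in atTop, ((n:ℝ)+1) * (max (t + 1/((n:ℝ)+1) - x) 0 - max (t - x) 0) = 0 := by
        have htend : Tendsto (fun n : ℕ => 1/((n:ℝ)+1)) atTop (nhds 0) :=
          tendsto_one_div_add_atTop_nhds_zero_nat
        filter_upwards [htend.eventually (eventually_lt_nhds (show (0:ℝ) < x - t by linarith))] with n hn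
        rw [max_eq_right (by linarith), max_eq_right (by linarith), sub_zero, mul_zero]
      rw [Set.indicator_of_notMem (by simpa using hx)]
      exact Tendsto.congr' (hev.mono fun n hn => hn.symm) tendsto_const_nhds

lemma Pput_determines {θ₁ θ₂ : Measure ℝ} (h1 : MemM θ₁) (h2 : MemM θ₂)
    (h : ∀ k, Pput θ₁ k = Pput θ₂ k) : θ₁ = θ₂ := by
  have i1 : IsFiniteMeasure θ₁ := h1.1
  have i2 : IsFiniteMeasure θ₂ := h2.1
  refine MeasureTheory.Measure.ext_of_Iic θ₁ θ₂ fun t => ?_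
  have t1 := cdf_from_put h1 t
  have t2 := cdf_from_put h2 t
  simp_rw [h] at t1
  have := tendsto_nhds_unique t1 t2
  exact (ENNReal.toReal_eq_toReal_iff' (measure_ne_top _ _) (measure_ne_top _ _)).mp this

end unique
section final

lemma linear_tendsto_zero {a b : ℝ} (h : Tendsto (fun x : ℝ => a * x + b) atTop (nhds 0)) :
    a = 0 ∧ b = 0 := by
  have h1 : Tendsto (fun x : ℝ => (a * (x+1) + b) - (a * x + b)) atTop (nhds 0) := by
    have := (h.comp (tendsto_atTop_add_const_right atTop (1:ℝ) tendsto_id)).sub h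
    simpa using this
  have h2 : Tendsto (fun _ : ℝ => a) atTop (nhds 0) :=
    h1.congr fun x => by ring
  have ha : a = 0 := tendsto_nhds_unique tendsto_const_nhds h2
  subst ha
  have h3 : Tendsto (fun _ : ℝ => b) atTop (nhds 0) := h.congr fun x => by ring
  exact ⟨rfl, tendsto_nhds_unique tendsto_const_nhds h3⟩

variable {μ ν : Measure ℝ} (hμ : MemM μ) (hν : MemM ν) (hmass : mass μ ≤ mass ν)
include hμ hν hmass

lemma mass_mean_of_Pput {θ : Measure ℝ} (hθ : MemM θ) (hP : ∀ k, Pput θ k = hh μ ν k) :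
    mass θ = mm μ ν ∧ mean θ = AC μ ν - pconst μ ν := by
  have hpar := parity hθ
  have hcall := call_tendsto_atTop hθ
  have hq := hh_diff_tendsto_atTop hμ hν hmass
  have hu : Tendsto (fun k : ℝ => (mass θ - mm μ ν) * k + ((AC μ ν - pconst μ ν) - mean θ))
      atTop (nhds 0) := by
    have h1 := hq.sub hcall
    simp only [sub_zero] at h1
    refine h1.congr fun k => ?_
    have := hpar k
    have := hP k
    nlinarith [hpar k, hP k]
  obtain ⟨ha, hb⟩ := linear_tendsto_zero hu
  constructor
  · linarith
  · linarith

theorem exists_unique_theta :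
    (∃! θ : Measure ℝ, MemM θ ∧
      ∀ k, Pput θ k = convHullFn (fun t => Pput ν t - Pput μ t) k + pconst μ ν) ∧
    (∀ θ : Measure ℝ,
      (MemM θ ∧
        ∀ k, Pput θ k = convHullFn (fun t => Pput ν t - Pput μ t) k + pconst μ ν) →
      mass θ = mass ν - mass μ ∧
      mean θ = mean ν - mean μ + cconst μ ν - pconst μ ν) := by
  have hkey : ∀ k, convHullFn (fun t => Pput ν t - Pput μ t) k + pconst μ ν = hh μ ν k := by
    intro k
    rfl
  constructor
  · refine ⟨thetaM μ ν, ⟨thetaM_MemM hμ hν hmass, fun k => ?_⟩, ?_⟩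
    · rw [hkey k]
      exact Pput_thetaM hμ hν hmass k
    · rintro θ' ⟨hM', hP'⟩
      refine Pput_determines hM' (thetaM_MemM hμ hν hmass) fun k => ?_
      rw [hP' k, hkey k, Pput_thetaM hμ hν hmass k]
  · rintro θ ⟨hM, hP⟩
    have := mass_mean_of_Pput hμ hν hmass hM (fun k => by rw [hP k, hkey k])
    refine ⟨?_, ?_⟩
    · have := this.1; simp only [mm] at this; linarith
    · have := this.2; simp only [AC] at this; linarith

end final


theorem stmt_11 (μ ν : Measure ℝ) (hμ : MemM μ) (hν : MemM ν)
    (hmass : mass μ ≤ mass ν) :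
    (∃! θ : Measure ℝ, MemM θ ∧
      ∀ k, Pput θ k = convHullFn (fun t => Pput ν t - Pput μ t) k + pconst μ ν) ∧
    (∀ θ : Measure ℝ,
      (MemM θ ∧
        ∀ k, Pput θ k = convHullFn (fun t => Pput ν t - Pput μ t) k + pconst μ ν) →
      mass θ = mass ν - mass μ ∧
      mean θ = mean ν - mean μ + cconst μ ν - pconst μ ν) :=
  exists_unique_theta hμ hν hmass

end
end
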